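/- arXiv:cs/0101024 — 3 statements merged into one kernel-verified Lean document; each statement's English description precedes it below -/
import Mathlib

section
/- Let n ≥ 2, let 1 ≤ i ≤ n−1, and let L be any set of permutations of {1,…,i}. For a uniformly random permutation σ of {1,…,n}, E[(σ(i+1) − σ(i)) · 1{pattern_i(σ) ∈ L}] = ((n+1)/i!) · ( |L|/2 − (1/(i+1)) · Σ_{ρ ∈ L} ρ(i) ). -/
open Finset

/-- `rnk σ i` is the final (1-based) rank of the `i`-th (1-based) input under the
permutation `σ`; junk value `0` out of range. -/
def rnk {n : ℕ} (σ : Equiv.Perm (Fin n)) (i : ℕ) : ℕ :=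
  if h : i - 1 < n then (σ ⟨i - 1, h⟩ : ℕ) + 1 else 0

/-- `relRank σ i` is the relative rank `x_i` of the `i`-th input among the first `i` inputs:
`x_i = |{j : 1 ≤ j ≤ i ∧ σ(j) ≤ σ(i)}|`. -/
def relRank {n : ℕ} (σ : Equiv.Perm (Fin n)) (i : ℕ) : ℕ :=
  ((Finset.Icc 1 i).filter fun j => rnk σ j ≤ rnk σ i).card

/-- Algorithm OP's active intervals: interval `i` (for `1 ≤ i ≤ n-1`) is active iff
`2 x_i < i + 1`, or `2 x_i = i + 1` and `i ≥ 2` and interval `i-1` is active. -/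
def opActive {n : ℕ} (σ : Equiv.Perm (Fin n)) : ℕ → Bool
  | 0 => false
  | i + 1 =>
    (decide (2 * relRank σ (i + 1) < i + 2)) ||
      ((decide (2 * relRank σ (i + 1) = i + 2)) && (decide (2 ≤ i + 1)) && opActive σ i)

/-- OP's profit `P_OP = Σ_{i=1}^{n-1} (σ(i+1) − σ(i))` over the active intervals `i`. -/
noncomputable def popProfit {n : ℕ} (σ : Equiv.Perm (Fin n)) : ℝ :=
  ∑ i ∈ Finset.Icc 1 (n - 1),
    if opActive σ i then ((rnk σ (i + 1) : ℝ) - rnk σ i) else 0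

/-- Expected profit of algorithm OP over a uniformly random permutation of `{1,…,n}`. -/
noncomputable def expPOP (n : ℕ) : ℝ :=
  (∑ σ : Equiv.Perm (Fin n), popProfit σ) / (n.factorial : ℝ)

/-- Harmonic number `H m = Σ_{j=1}^m 1/j`. -/
noncomputable def harm (m : ℕ) : ℝ := ∑ j ∈ Finset.Icc 1 m, (1 : ℝ) / j

/-- `patternRank σ i j` is the value at `j` of the prefix pattern `pattern_i(σ)`:
`|{j' : 1 ≤ j' ≤ i ∧ σ(j') ≤ σ(j)}|`. -/
def patternRank {n : ℕ} (σ : Equiv.Perm (Fin n)) (i j : ℕ) : ℕ :=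
  ((Finset.Icc 1 i).filter fun j' => rnk σ j' ≤ rnk σ j).card

open Equiv

variable {i m n : ℕ}

variable {i m n : ℕ}

/-- count of j' < i with σ(j') < σ(j) -/
def patF (h : i ≤ n) (σ : Perm (Fin n)) (j : Fin i) : Fin i :=
  ⟨(univ.filter fun j' : Fin i => σ (j'.castLE h) < σ (j.castLE h)).card, by
    have hj : j ∉ (univ.filter fun j' : Fin i => σ (j'.castLE h) < σ (j.castLE h)) := by
      simp
    calc (univ.filter fun j' : Fin i => σ (j'.castLE h) < σ (j.castLE h)).card
        ≤ (univ.erase j).card := Finset.card_le_card (fun x hx => by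
          rcases Finset.mem_filter.mp hx with ⟨-, hlt⟩
          refine Finset.mem_erase.mpr ⟨?_, Finset.mem_univ x⟩
          rintro rfl; exact lt_irrefl _ hlt)
      _ < univ.card := Finset.card_erase_lt_of_mem (Finset.mem_univ j)
      _ = i := Finset.card_fin i⟩

lemma patF_lt_iff (h : i ≤ n) (σ : Perm (Fin n)) (j j' : Fin i) :
    patF h σ j < patF h σ j' ↔ σ (j.castLE h) < σ (j'.castLE h) := by
  have mono : ∀ a b : Fin i, σ (a.castLE h) < σ (b.castLE h) → patF h σ a < patF h σ b := by
    intro a b hab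
    have hss : (univ.filter fun x : Fin i => σ (x.castLE h) < σ (a.castLE h)) ⊂
        (univ.filter fun x : Fin i => σ (x.castLE h) < σ (b.castLE h)) := by
      constructor
      · intro x hx
        rcases Finset.mem_filter.mp hx with ⟨-, hx⟩
        exact Finset.mem_filter.mpr ⟨Finset.mem_univ x, hx.trans hab⟩
      · intro hsub
        have : a ∈ (univ.filter fun x : Fin i => σ (x.castLE h) < σ (a.castLE h)) :=
          hsub (Finset.mem_filter.mpr ⟨Finset.mem_univ a, hab⟩)
        rcases Finset.mem_filter.mp this with ⟨-, hc⟩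
        exact lt_irrefl _ hc
    exact Finset.card_lt_card hss
  constructor
  · intro hlt
    rcases lt_trichotomy (σ (j.castLE h)) (σ (j'.castLE h)) with hc | hc | hc
    · exact hc
    · have : j = j' := Fin.castLE_injective h (σ.injective hc)
      subst this; exact absurd hlt (lt_irrefl _)
    · exact absurd (mono _ _ hc) (not_lt_of_gt hlt)
  · exact mono j j'

lemma patF_injective (h : i ≤ n) (σ : Perm (Fin n)) : Function.Injective (patF h σ) := by
  intro a b hab
  rcases lt_trichotomy (σ (a.castLE h)) (σ (b.castLE h)) with hc | hc | hc
  · have := (patF_lt_iff h σ a b).mpr hc; rw [hab] at this; exact absurd this (lt_irrefl _)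
  · exact Fin.castLE_injective h (σ.injective hc)
  · have := (patF_lt_iff h σ b a).mpr hc; rw [hab] at this; exact absurd this (lt_irrefl _)

/-- the prefix pattern as a permutation -/
noncomputable def patP (h : i ≤ n) (σ : Perm (Fin n)) : Perm (Fin i) :=
  Equiv.ofBijective (patF h σ) ((Finite.injective_iff_bijective).mp (patF_injective h σ))

lemma patP_apply (h : i ≤ n) (σ : Perm (Fin n)) (j : Fin i) : patP h σ j = patF h σ j := rfl

lemma patP_refl (σ : Perm (Fin n)) : patP (le_refl n) σ = σ := by
  ext j
  rw [patP_apply]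
  show ((univ.filter fun j' : Fin n => σ (j'.castLE (le_refl n)) < σ (j.castLE (le_refl n))).card : ℕ) = _
  have hcast : ∀ x : Fin n, x.castLE (le_refl n) = x := fun x => rfl
  simp only [hcast]
  have : (univ.filter fun j' : Fin n => σ j' < σ j).card
      = (univ.filter fun v : Fin n => v < σ j).card := by
    apply Finset.card_bij (fun a _ => σ a)
    · intro a ha; rcases Finset.mem_filter.mp ha with ⟨-, ha⟩
      exact Finset.mem_filter.mpr ⟨Finset.mem_univ _, ha⟩
    · intro a _ b _ hab; exact σ.injective hab
    · intro v hv; rcases Finset.mem_filter.mp hv with ⟨-, hv⟩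
      exact ⟨σ.symm v, Finset.mem_filter.mpr ⟨Finset.mem_univ _, by simpa using hv⟩, by simp⟩
  rw [this]
  have : (univ.filter fun v : Fin n => v < σ j) = Finset.Iio (σ j) := by
    ext v; simp
  rw [this, Fin.card_Iio]

lemma count_lt_perm (ρ : Perm (Fin m)) (x : Fin m) :
    (univ.filter fun j' : Fin m => ρ j' < ρ x).card = (ρ x : ℕ) := by
  have h := congrArg (fun e : Perm (Fin m) => ((e x : Fin m) : ℕ)) (patP_refl ρ)
  simpa [patP_apply, patF] using h

lemma patP_tower (hi : i ≤ m) (hm : m ≤ n) (σ : Perm (Fin n)) :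
    patP (hi.trans hm) σ = patP hi (patP hm σ) := by
  ext j
  rw [patP_apply, patP_apply]
  show ((univ.filter fun j' : Fin i => σ (j'.castLE _) < σ (j.castLE _)).card : ℕ)
    = ((univ.filter fun j' : Fin i => (patP hm σ) (j'.castLE hi) < (patP hm σ) (j.castLE hi)).card : ℕ)
  congr 1
  apply Finset.filter_congr
  intro x _
  rw [patP_apply, patP_apply]
  rw [show (patF hm σ (x.castLE hi) < patF hm σ (j.castLE hi)) ↔ _ from patF_lt_iff hm σ _ _]
  simp [Fin.castLE_castLE]

/-- insert a new last position with value `r` -/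
def insE (ρ : Perm (Fin m)) (r : Fin (m + 1)) : Perm (Fin (m + 1)) :=
  finSuccEquivLast.trans ((Equiv.optionCongr ρ).trans (finSuccEquiv' r).symm)

lemma insE_castSucc (ρ : Perm (Fin m)) (r : Fin (m + 1)) (j : Fin m) :
    insE ρ r (j.castSucc) = r.succAbove (ρ j) := by
  simp [insE, finSuccEquivLast_castSucc, finSuccEquiv'_symm_some]

lemma insE_last (ρ : Perm (Fin m)) (r : Fin (m + 1)) :
    insE ρ r (Fin.last m) = r := by
  simp [insE, finSuccEquivLast_last, finSuccEquiv'_symm_none]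

lemma castLE_succ (j : Fin m) : j.castLE (Nat.le_succ m) = j.castSucc := rfl

lemma patP_insE (ρ : Perm (Fin m)) (r : Fin (m + 1)) :
    patP (Nat.le_succ m) (insE ρ r) = ρ := by
  ext j
  rw [patP_apply]
  show ((univ.filter fun j' : Fin m => insE ρ r (j'.castLE _) < insE ρ r (j.castLE _)).card : ℕ) = _
  simp only [castLE_succ, insE_castSucc]
  have : ∀ a b : Fin m, (r.succAbove a < r.succAbove b ↔ a < b) := fun a b =>
    r.succAbove_lt_succAbove_iff
  calc (univ.filter fun j' : Fin m => r.succAbove (ρ j') < r.succAbove (ρ j)).card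
      = (univ.filter fun j' : Fin m => ρ j' < ρ j).card := by
        congr 1; apply Finset.filter_congr; intro x _; simp [this]
    _ = (ρ j : ℕ) := count_lt_perm ρ j

lemma insE_bijective : Function.Bijective (fun p : Perm (Fin m) × Fin (m + 1) => insE p.1 p.2) := by
  rw [Fintype.bijective_iff_injective_and_card]
  constructor
  · rintro ⟨ρ, r⟩ ⟨ρ', r'⟩ hE
    simp only at hE
    have hr : r = r' := by rw [← insE_last ρ r, ← insE_last ρ' r', hE]
    have hρ : ρ = ρ' := by
      rw [← patP_insE ρ r, ← patP_insE ρ' r', hE]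
    simp [hr, hρ]
  · simp [Fintype.card_perm, Nat.factorial_succ, Nat.mul_comm]

lemma succAbove_val (r : Fin (m + 1)) (x : Fin m) :
    (r.succAbove x : ℕ) = (x : ℕ) + if (r : ℕ) ≤ (x : ℕ) then 1 else 0 := by
  rcases lt_or_ge ((x : ℕ)) ((r : ℕ)) with hc | hc
  · rw [Fin.succAbove_of_castSucc_lt r x (by simpa [Fin.lt_def] using hc)]
    simp [Nat.not_le.mpr hc]
  · rw [Fin.succAbove_of_le_castSucc r x (by simpa [Fin.le_def] using hc)]
    simp [hc]

lemma sum_ind (x : Fin m) :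
    (∑ r : Fin (m + 1), if (r : ℕ) ≤ (x : ℕ) then (1 : ℕ) else 0) = (x : ℕ) + 1 := by
  rw [Fin.sum_univ_eq_sum_range (fun r => if r ≤ (x : ℕ) then (1 : ℕ) else 0)]
  rw [Finset.sum_ite, Finset.sum_const_zero, add_zero, Finset.sum_const, smul_eq_mul, mul_one]
  have : (Finset.range (m + 1)).filter (fun r => r ≤ (x : ℕ)) = Finset.range ((x : ℕ) + 1) := by
    ext a; simp only [Finset.mem_filter, Finset.mem_range]
    have := x.isLt; omega
  rw [this, Finset.card_range]

lemma helper1 (r_ : True) (x : Fin m) :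
    (∑ r : Fin (m + 1), ((r.succAbove x : ℕ) + 1)) = (m + 2) * ((x : ℕ) + 1) := by
  have : ∀ r : Fin (m + 1), (r.succAbove x : ℕ) + 1
      = ((x : ℕ) + 1) + (if (r : ℕ) ≤ (x : ℕ) then 1 else 0) := by
    intro r; rw [succAbove_val]; ring
  rw [Finset.sum_congr rfl (fun r _ => this r), Finset.sum_add_distrib, sum_ind]
  simp [Finset.card_univ]
  ring

lemma helper2 : 2 * (∑ r : Fin (m + 1), ((r : ℕ) + 1)) = (m + 1) * (m + 2) := by
  rw [Fin.sum_univ_eq_sum_range (fun r => r + 1), Finset.sum_add_distrib]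
  have h2 : (∑ r ∈ Finset.range (m + 1), r) * 2 = (m + 1) * m := by
    simpa using Finset.sum_range_id_mul_two (m + 1)
  simp only [Finset.sum_const, smul_eq_mul, mul_one, Finset.card_range]
  nlinarith [h2]

noncomputable def lvl (h : i ≤ m) (g : Perm (Fin i) → ℝ) (j : Fin m) : ℝ :=
  ∑ ρ : Perm (Fin m), g (patP h ρ) * (((ρ j : ℕ) : ℝ) + 1)

lemma lvl_succ (h : i ≤ m) (g : Perm (Fin i) → ℝ) (j : Fin m) :
    lvl (h.trans (Nat.le_succ m)) g j.castSucc = ((m : ℝ) + 2) * lvl h g j := by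
  unfold lvl
  rw [← Fintype.sum_bijective _ insE_bijective
    (fun p : Perm (Fin m) × Fin (m + 1) =>
      g (patP (h.trans (Nat.le_succ m)) (insE p.1 p.2))
        * (((insE p.1 p.2 j.castSucc : Fin (m+1)) : ℕ) + 1 : ℝ))
    _ (fun p => rfl)]
  rw [Fintype.sum_prod_type]
  have key : ∀ (ρ : Perm (Fin m)) (r : Fin (m + 1)),
      g (patP (h.trans (Nat.le_succ m)) (insE ρ r)) = g (patP h ρ) := by
    intro ρ r
    rw [patP_tower h (Nat.le_succ m), patP_insE]
  calc (∑ ρ : Perm (Fin m), ∑ r : Fin (m + 1),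
        g (patP (h.trans (Nat.le_succ m)) (insE ρ r)) * (((insE ρ r j.castSucc : Fin (m+1)) : ℕ) + 1 : ℝ))
      = ∑ ρ : Perm (Fin m), g (patP h ρ) * ∑ r : Fin (m + 1), (((r.succAbove (ρ j) : Fin (m+1)) : ℕ) + 1 : ℝ) := by
        apply Finset.sum_congr rfl; intro ρ _
        rw [Finset.mul_sum]
        apply Finset.sum_congr rfl; intro r _
        rw [key, insE_castSucc]
    _ = ((m : ℝ) + 2) * ∑ ρ : Perm (Fin m), g (patP h ρ) * (((ρ j : ℕ) : ℝ) + 1) := by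
        rw [Finset.mul_sum]
        apply Finset.sum_congr rfl; intro ρ _
        have hn : (∑ r : Fin (m + 1), (((r.succAbove (ρ j) : Fin (m+1)) : ℕ) + 1 : ℝ))
            = (((m + 2) * (((ρ j : Fin m) : ℕ) + 1) : ℕ) : ℝ) := by
          rw [← helper1 trivial (ρ j)]
          push_cast
          rfl
        rw [hn]; push_cast; ring

lemma lvl_base_last (g : Perm (Fin i) → ℝ) :
    2 * lvl (Nat.le_succ i) g (Fin.last i) = ((i : ℝ) + 1) * ((i : ℝ) + 2) * ∑ ρ : Perm (Fin i), g ρ := by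
  unfold lvl
  rw [← Fintype.sum_bijective _ insE_bijective
    (fun p : Perm (Fin i) × Fin (i + 1) =>
      g (patP (Nat.le_succ i) (insE p.1 p.2))
        * (((insE p.1 p.2 (Fin.last i) : Fin (i+1)) : ℕ) + 1 : ℝ))
    _ (fun p => rfl)]
  rw [Fintype.sum_prod_type]
  have step : ∀ ρ : Perm (Fin i), (∑ r : Fin (i + 1),
      g (patP (Nat.le_succ i) (insE ρ r)) * (((insE ρ r (Fin.last i) : Fin (i+1)) : ℕ) + 1 : ℝ))
      = g ρ * ∑ r : Fin (i + 1), (((r : ℕ) : ℝ) + 1) := by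
    intro ρ
    rw [Finset.mul_sum]
    apply Finset.sum_congr rfl; intro r _
    rw [patP_insE, insE_last]
  rw [Finset.sum_congr rfl (fun ρ _ => step ρ)]
  have hs : (∑ r : Fin (i + 1), (((r : ℕ) : ℝ) + 1)) = ((i : ℝ) + 1) * ((i : ℝ) + 2) / 2 := by
    have h2 : ((2 * (∑ r : Fin (i + 1), ((r : ℕ) + 1)) : ℕ) : ℝ) = (((i + 1) * (i + 2) : ℕ) : ℝ) :=
      congrArg _ (helper2 (m := i))
    push_cast at h2
    linarith
  rw [← Finset.sum_mul, hs]
  ring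

lemma lvl_tel (g : Perm (Fin i) → ℝ) : ∀ (d m N : ℕ) (hm : N = m + d) (h : i ≤ m)
    (hN : i ≤ N) (hmN : m ≤ N) (j : Fin m),
    (((m + 1).factorial : ℝ)) * lvl hN g (j.castLE hmN) = (((N + 1).factorial : ℝ)) * lvl h g j := by
  intro d
  induction d with
  | zero =>
    intro m N hm h hN hmN j
    subst hm
    have hj : j.castLE hmN = j := Fin.ext rfl
    rw [hj]
  | succ d ih =>
    intro m N hm h hN hmN j
    subst hm
    have hj : j.castLE hmN = (j.castLE (Nat.le_add_right m d)).castSucc := Fin.ext rfl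
    rw [hj]
    rw [show lvl hN g ((j.castLE (Nat.le_add_right m d)).castSucc)
        = (((m + d : ℕ) : ℝ) + 2) * lvl (h.trans (Nat.le_add_right m d)) g (j.castLE (Nat.le_add_right m d)) from
      lvl_succ (h.trans (Nat.le_add_right m d)) g (j.castLE (Nat.le_add_right m d))]
    have := ih m (m + d) rfl h (h.trans (Nat.le_add_right m d)) (Nat.le_add_right m d) j
    have hfac : (((m + d + 1 + 1).factorial : ℝ)) = (((m + d : ℕ) : ℝ) + 2) * ((m + d + 1).factorial : ℝ) := by
      rw [Nat.factorial_succ]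
      push_cast
      ring
    rw [show m + (d + 1) + 1 = m + d + 1 + 1 from rfl, hfac]
    nlinarith [this]

lemma rnk_eq (σ : Perm (Fin n)) (j : ℕ) (h1 : 1 ≤ j) (h2 : j ≤ n) :
    rnk σ j = (σ ⟨j - 1, by omega⟩ : ℕ) + 1 := by
  rw [rnk, dif_pos]

lemma count_le (h : i ≤ n) (σ : Perm (Fin n)) (y : Fin i) :
    (univ.filter fun x : Fin i => σ (x.castLE h) ≤ σ (y.castLE h)).card
      = (patF h σ y : ℕ) + 1 := by
  have hset : (univ.filter fun x : Fin i => σ (x.castLE h) ≤ σ (y.castLE h))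
      = insert y (univ.filter fun x : Fin i => σ (x.castLE h) < σ (y.castLE h)) := by
    ext x
    simp only [Finset.mem_filter, Finset.mem_insert, Finset.mem_univ, true_and]
    constructor
    · intro hx
      rcases lt_or_eq_of_le hx with hc | hc
      · exact Or.inr hc
      · exact Or.inl (Fin.castLE_injective h (σ.injective hc))
    · rintro (rfl | hx)
      · exact le_refl _
      · exact le_of_lt hx
  rw [hset, Finset.card_insert_of_notMem (by simp)]
  rfl

lemma patternRank_eq (h : i ≤ n) (σ : Perm (Fin n)) (j : ℕ) (h1 : 1 ≤ j) (h2 : j ≤ i) :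
    patternRank σ i j = (patF h σ ⟨j - 1, by omega⟩ : ℕ) + 1 := by
  rw [patternRank]
  rw [← count_le h σ ⟨j - 1, by omega⟩]
  apply Finset.card_bij (fun (a : ℕ) (ha : a ∈ _) => (⟨a - 1, by
    rcases Finset.mem_filter.mp ha with ⟨hm, -⟩
    rcases Finset.mem_Icc.mp hm with ⟨ha1, ha2⟩
    omega⟩ : Fin i))
  · intro a ha
    rcases Finset.mem_filter.mp ha with ⟨hm, hle⟩
    rcases Finset.mem_Icc.mp hm with ⟨ha1, ha2⟩
    refine Finset.mem_filter.mpr ⟨Finset.mem_univ _, ?_⟩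
    rw [rnk_eq σ a ha1 (ha2.trans h), rnk_eq σ j h1 (h2.trans h)] at hle
    have : ∀ (b : ℕ) (hb1 : 1 ≤ b) (hb2 : b ≤ i), (⟨b - 1, by omega⟩ : Fin n)
        = (Fin.mk (b-1) (by omega) : Fin i).castLE h := fun b hb1 hb2 => rfl
    rw [this a ha1 ha2, this j h1 h2] at hle
    exact Fin.le_def.mpr (by omega)
  · intro a ha b hb hab
    rcases Finset.mem_Icc.mp (Finset.mem_filter.mp ha).1 with ⟨ha1, -⟩
    rcases Finset.mem_Icc.mp (Finset.mem_filter.mp hb).1 with ⟨hb1, -⟩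
    have hv : a - 1 = b - 1 := congrArg Fin.val hab
    omega
  · intro x hx
    rcases Finset.mem_filter.mp hx with ⟨-, hle⟩
    refine ⟨(x : ℕ) + 1, Finset.mem_filter.mpr ⟨Finset.mem_Icc.mpr ⟨by omega, by omega⟩, ?_⟩, by
      apply Fin.ext; simp⟩
    rw [rnk_eq σ ((x:ℕ)+1) (by omega) (by have := x.isLt; omega),
        rnk_eq σ j h1 (h2.trans h)]
    have h3 : (⟨(x:ℕ) + 1 - 1, by have := x.isLt; omega⟩ : Fin n) = x.castLE h := Fin.ext (by simp)
    have h4 : (⟨j - 1, by omega⟩ : Fin n) = (Fin.mk (j-1) (by omega) : Fin i).castLE h := rfl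
    rw [h3, h4]
    exact Nat.succ_le_succ (by exact_mod_cast hle)

lemma cond_iff (h : i ≤ n) (σ : Perm (Fin n)) (L : Finset (Perm (Fin i))) :
    (∃ ρ ∈ L, ∀ j ∈ Finset.Icc 1 i, patternRank σ i j = rnk ρ j) ↔ patP h σ ∈ L := by
  constructor
  · rintro ⟨ρ, hρ, hall⟩
    have hpe : patP h σ = ρ := by
      apply Equiv.ext
      intro x
      have hx := hall ((x : ℕ) + 1) (Finset.mem_Icc.mpr ⟨by omega, by have := x.isLt; omega⟩)
      rw [patternRank_eq h σ ((x : ℕ) + 1) (by omega) (by have := x.isLt; omega)] at hx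
      rw [rnk_eq ρ ((x : ℕ) + 1) (by omega) (by have := x.isLt; omega)] at hx
      have hxx : (⟨(x : ℕ) + 1 - 1, by have := x.isLt; omega⟩ : Fin i) = x := Fin.ext (by simp)
      rw [hxx] at hx
      rw [patP_apply]
      exact Fin.ext (by omega)
    rw [hpe]; exact hρ
  · intro hmem
    refine ⟨patP h σ, hmem, ?_⟩
    intro j hj
    rcases Finset.mem_Icc.mp hj with ⟨hj1, hj2⟩
    rw [patternRank_eq h σ j hj1 hj2, rnk_eq (patP h σ) j hj1 hj2, patP_apply]


open scoped Classical in
/-- For `n ≥ 2`, `1 ≤ i ≤ n−1`, and any set `L` of permutations of `{1,…,i}`: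
`E[(σ(i+1) − σ(i)) · 1{pattern_i(σ) ∈ L}]
  = ((n+1)/i!) · ( |L|/2 − (1/(i+1)) · Σ_{ρ ∈ L} ρ(i) )`. -/
theorem stmt16 (n i : ℕ) (hn : 2 ≤ n) (hi1 : 1 ≤ i) (hi2 : i ≤ n - 1)
    (L : Finset (Equiv.Perm (Fin i))) :
    (∑ σ : Equiv.Perm (Fin n),
        if ∃ ρ ∈ L, ∀ j ∈ Finset.Icc 1 i, patternRank σ i j = rnk ρ j
        then ((rnk σ (i + 1) : ℝ) - rnk σ i) else 0) / (n.factorial : ℝ)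
      = (((n : ℝ) + 1) / (i.factorial : ℝ)) *
          ((L.card : ℝ) / 2 - (1 / ((i : ℝ) + 1)) * ∑ ρ ∈ L, (rnk ρ i : ℝ)) := by
  have hin : i < n := by omega
  have h : i ≤ n := le_of_lt hin
  set g : Perm (Fin i) → ℝ := fun ρ => if ρ ∈ L then (1 : ℝ) else 0 with hg
  have hsummand : ∀ σ : Perm (Fin n),
      (if ∃ ρ ∈ L, ∀ j ∈ Finset.Icc 1 i, patternRank σ i j = rnk ρ j
        then ((rnk σ (i + 1) : ℝ) - rnk σ i) else 0)
      = g (patP h σ) * (((σ ⟨i, hin⟩ : ℕ) : ℝ) + 1)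
        - g (patP h σ) * (((σ ⟨i - 1, by omega⟩ : ℕ) : ℝ) + 1) := by
    intro σ
    rw [rnk_eq σ (i + 1) (by omega) (by omega), rnk_eq σ i (by omega) (by omega)]
    by_cases hc : patP h σ ∈ L
    · rw [if_pos ((cond_iff h σ L).mpr hc)]
      simp only [hg, if_pos hc, one_mul]
      push_cast
      ring_nf
    · rw [if_neg (fun hex => hc ((cond_iff h σ L).mp hex))]
      simp [hg, hc]
  have hnum : (∑ σ : Equiv.Perm (Fin n),
      if ∃ ρ ∈ L, ∀ j ∈ Finset.Icc 1 i, patternRank σ i j = rnk ρ j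
      then ((rnk σ (i + 1) : ℝ) - rnk σ i) else 0)
      = lvl h g ⟨i, hin⟩ - lvl h g ⟨i - 1, by omega⟩ := by
    calc (∑ σ : Equiv.Perm (Fin n),
        if ∃ ρ ∈ L, ∀ j ∈ Finset.Icc 1 i, patternRank σ i j = rnk ρ j
        then ((rnk σ (i + 1) : ℝ) - rnk σ i) else 0)
        = ∑ σ : Equiv.Perm (Fin n), (g (patP h σ) * (((σ ⟨i, hin⟩ : ℕ) : ℝ) + 1)
          - g (patP h σ) * (((σ ⟨i - 1, by omega⟩ : ℕ) : ℝ) + 1)) :=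
          Finset.sum_congr rfl (fun σ _ => by convert hsummand σ using 2)
      _ = lvl h g ⟨i, hin⟩ - lvl h g ⟨i - 1, by omega⟩ := Finset.sum_sub_distrib _ _
  rw [hnum]
  have t1 := lvl_tel g (n - (i + 1)) (i + 1) n (by omega) (Nat.le_succ i) h (by omega) (Fin.last i)
  rw [show (Fin.last i).castLE (show i + 1 ≤ n by omega) = (⟨i, hin⟩ : Fin n) from Fin.ext rfl] at t1
  have t2 := lvl_tel g (n - i) i n (by omega) (le_refl i) h h ⟨i - 1, by omega⟩
  rw [show (Fin.mk (i-1) (by omega) : Fin i).castLE h = (⟨i - 1, by omega⟩ : Fin n) from Fin.ext rfl] at t2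
  have b1 := lvl_base_last g
  have b2 : lvl (le_refl i) g ⟨i - 1, by omega⟩ = ∑ ρ ∈ L, (rnk ρ i : ℝ) := by
    unfold lvl
    rw [Finset.sum_congr rfl (fun ρ _ => by rw [patP_refl])]
    have : ∀ ρ : Perm (Fin i), g ρ * (((ρ ⟨i - 1, by omega⟩ : ℕ) : ℝ) + 1)
        = if ρ ∈ L then ((rnk ρ i : ℝ)) else 0 := by
      intro ρ
      by_cases hc : ρ ∈ L
      · simp only [hg, if_pos hc, one_mul]
        rw [rnk_eq ρ i hi1 (le_refl i)]
        push_cast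
        ring
      · simp [hg, hc]
    rw [Finset.sum_congr rfl (fun ρ _ => this ρ), ← Finset.sum_filter]
    congr 1
    simp [Finset.filter_mem_eq_inter]
  have gsum : (∑ ρ : Perm (Fin i), g ρ) = (L.card : ℝ) := by
    simp only [hg]
    rw [Finset.sum_boole]
    simp [Finset.filter_mem_eq_inter]
  rw [gsum] at b1
  have hf2 : ((i + 1 + 1).factorial : ℝ) = ((i : ℝ) + 2) * ((i : ℝ) + 1) * (i.factorial : ℝ) := by
    rw [Nat.factorial_succ, Nat.factorial_succ]; push_cast; ring
  have hf1 : ((i + 1).factorial : ℝ) = ((i : ℝ) + 1) * (i.factorial : ℝ) := by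
    rw [Nat.factorial_succ]; push_cast; ring
  have hfn : ((n + 1).factorial : ℝ) = ((n : ℝ) + 1) * (n.factorial : ℝ) := by
    rw [Nat.factorial_succ]; push_cast; ring
  rw [hf2, hfn] at t1
  rw [hf1, hfn] at t2
  have hF : (0 : ℝ) < (i.factorial : ℝ) := by exact_mod_cast i.factorial_pos
  have hN : (0 : ℝ) < (n.factorial : ℝ) := by exact_mod_cast n.factorial_pos
  have hi1' : (0 : ℝ) < (i : ℝ) + 1 := by positivity
  have hi2' : (0 : ℝ) < (i : ℝ) + 2 := by positivity
  set A := lvl h g (⟨i, hin⟩ : Fin n)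
  set B := lvl h g (⟨i - 1, by omega⟩ : Fin n)
  set V := lvl (Nat.le_succ i) g (Fin.last i)
  set G := ((L.card : ℝ))
  set Q := (∑ ρ ∈ L, (rnk ρ i : ℝ))
  rw [div_eq_iff (ne_of_gt hN)]
  rw [b2] at t2
  have hA : 2 * (i.factorial : ℝ) * A = ((n : ℝ) + 1) * (n.factorial : ℝ) * G := by
    have h2 : ((i : ℝ) + 1) * ((i : ℝ) + 2) * (2 * (i.factorial : ℝ) * A)
        = ((i : ℝ) + 1) * ((i : ℝ) + 2) * (((n : ℝ) + 1) * (n.factorial : ℝ) * G) := by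
      linear_combination 2 * t1 + (((n : ℝ) + 1) * (n.factorial : ℝ)) * b1
    exact mul_left_cancel₀ (by positivity) h2
  field_simp
  linear_combination (((i : ℝ) + 1)) * hA - 2 * t2
end

section
/- Let n ≥ 2 and 1 ≤ i ≤ n−1. For every set L of permutations of {1,…,i}, the expected amortized profit E[(σ(i+1) − σ(i)) · 1{pattern_i(σ) ∈ L}] is at most E[(σ(i+1) − σ(i)) · 1{interval i is active}], the expected amortized profit of algorithm OP on interval i. -/
open Finset

namespace Stmt17Aux


variable {n : ℕ}

lemma rnk_bounds (σ : Equiv.Perm (Fin n)) {j : ℕ} (h1 : 1 ≤ j) (h2 : j ≤ n) :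
    1 ≤ rnk σ j ∧ rnk σ j ≤ n := by
  have h : j - 1 < n := by omega
  simp only [rnk, dif_pos h]
  have := (σ ⟨j - 1, h⟩).isLt
  omega

lemma rnk_inj (σ : Equiv.Perm (Fin n)) {j j' : ℕ} (h1 : 1 ≤ j) (h2 : j ≤ n)
    (h1' : 1 ≤ j') (h2' : j' ≤ n) (h : rnk σ j = rnk σ j') : j = j' := by
  have hj : j - 1 < n := by omega
  have hj' : j' - 1 < n := by omega
  simp only [rnk, dif_pos hj, dif_pos hj'] at h
  have he : σ ⟨j - 1, hj⟩ = σ ⟨j' - 1, hj'⟩ := by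
    apply Fin.ext; omega
  have := congrArg Fin.val (σ.injective he)
  simp at this
  omega

lemma pr_mem (σ : Equiv.Perm (Fin n)) {i j : ℕ} (hj : j ∈ Icc 1 i) :
    patternRank σ i j ∈ Icc 1 i := by
  simp only [mem_Icc]
  constructor
  · have : j ∈ (Icc 1 i).filter fun j' => rnk σ j' ≤ rnk σ j :=
      mem_filter.2 ⟨hj, le_refl _⟩
    have h2 := Finset.card_pos.2 ⟨j, this⟩
    simpa [patternRank] using h2
  · calc patternRank σ i j ≤ (Icc 1 i).card := Finset.card_filter_le _ _
      _ = i := by simp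

lemma pr_le_iff (σ : Equiv.Perm (Fin n)) {i j j' : ℕ} (hin : i ≤ n)
    (hj : j ∈ Icc 1 i) (hj' : j' ∈ Icc 1 i) :
    patternRank σ i j ≤ patternRank σ i j' ↔ rnk σ j ≤ rnk σ j' := by
  simp only [mem_Icc] at hj hj'
  rcases le_or_gt (rnk σ j) (rnk σ j') with h | h
  · simp only [h, iff_true]
    apply Finset.card_le_card
    intro a ha
    simp only [mem_filter] at ha ⊢
    exact ⟨ha.1, le_trans ha.2 h⟩
  · have hlt : patternRank σ i j' < patternRank σ i j := by
      apply Finset.card_lt_card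
      constructor
      · intro a ha
        simp only [mem_filter] at ha ⊢
        exact ⟨ha.1, le_trans ha.2 (le_of_lt h)⟩
      · intro hsub
        have hjmem : j ∈ (Icc 1 i).filter fun a => rnk σ a ≤ rnk σ j :=
          mem_filter.2 ⟨mem_Icc.2 hj, le_refl _⟩
        have := mem_filter.1 (hsub hjmem)
        omega
    omega

lemma pr_inj (σ : Equiv.Perm (Fin n)) {i j j' : ℕ} (hin : i ≤ n)
    (hj : j ∈ Icc 1 i) (hj' : j' ∈ Icc 1 i)
    (h : patternRank σ i j = patternRank σ i j') : j = j' := by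
  have h1 := (pr_le_iff σ hin hj hj').1 (le_of_eq h)
  have h2 := (pr_le_iff σ hin hj' hj).1 (le_of_eq h.symm)
  simp only [mem_Icc] at hj hj'
  exact rnk_inj σ hj.1 (le_trans hj.2 hin) hj'.1 (le_trans hj'.2 hin) (le_antisymm h1 h2)

lemma pr_surj (σ : Equiv.Perm (Fin n)) {i : ℕ} (hin : i ≤ n) {v : ℕ} (hv : v ∈ Icc 1 i) :
    ∃ j ∈ Icc 1 i, patternRank σ i j = v := by
  have himg : (Icc 1 i).image (patternRank σ i) = Icc 1 i := by
    apply Finset.eq_of_subset_of_card_le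
    · intro a ha
      obtain ⟨j, hj, rfl⟩ := Finset.mem_image.1 ha
      exact pr_mem σ hj
    · rw [Finset.card_image_of_injOn]
      intro a ha b hb hab
      exact pr_inj σ hin ha hb hab
  rw [← himg] at hv
  obtain ⟨j, hj, hjv⟩ := Finset.mem_image.1 hv
  exact ⟨j, hj, hjv⟩

lemma pr_compl (σ : Equiv.Perm (Fin n)) {i m : ℕ} (hin : i ≤ n) (hm : m ∈ Icc 1 i) :
    ((Icc 1 i).filter fun j' => rnk σ m ≤ rnk σ j').card = i + 1 - patternRank σ i m := by
  have hmm := mem_Icc.1 hm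
  have hcard : ((Icc 1 i).filter fun j' => rnk σ m ≤ rnk σ j').card
      + ((Icc 1 i).filter fun j' => rnk σ j' ≤ rnk σ m).card = i + 1 := by
    have hu : ((Icc 1 i).filter fun j' => rnk σ m ≤ rnk σ j')
        ∪ ((Icc 1 i).filter fun j' => rnk σ j' ≤ rnk σ m) = Icc 1 i := by
      rw [← Finset.filter_or]
      apply Finset.filter_true_of_mem
      intro a _
      exact le_total _ _ |>.symm
    have hi : ((Icc 1 i).filter fun j' => rnk σ m ≤ rnk σ j')
        ∩ ((Icc 1 i).filter fun j' => rnk σ j' ≤ rnk σ m) = {m} := by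
      rw [← Finset.filter_and]
      apply Finset.eq_singleton_iff_unique_mem.2
      constructor
      · exact mem_filter.2 ⟨hm, le_refl _, le_refl _⟩
      · intro a ha
        have ha' := mem_filter.1 ha
        have haIcc := mem_Icc.1 ha'.1
        exact rnk_inj σ haIcc.1 (by omega) hmm.1 (by omega)
          (le_antisymm ha'.2.2 ha'.2.1)
    have := Finset.card_union_add_card_inter
      ((Icc 1 i).filter fun j' => rnk σ m ≤ rnk σ j')
      ((Icc 1 i).filter fun j' => rnk σ j' ≤ rnk σ m)
    rw [hu, hi] at this
    simp at this
    omega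
  have hpr : patternRank σ i m ≤ i := (mem_Icc.1 (pr_mem σ hm)).2
  unfold patternRank at *
  omega



variable {n : ℕ}

lemma rnk_rev (σ : Equiv.Perm (Fin n)) {j : ℕ} (h1 : 1 ≤ j) (h2 : j ≤ n) :
    rnk (Fin.revPerm * σ) j = n + 1 - rnk σ j := by
  have h : j - 1 < n := by omega
  simp only [rnk, dif_pos h, Equiv.Perm.mul_apply, Fin.revPerm_apply, Fin.val_rev]
  have := (σ ⟨j - 1, h⟩).isLt
  omega



variable {n : ℕ}

/-- the position in `[1,i]` carrying the complementary pattern rank. -/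
def p0 {n : ℕ} (σ₀ : Equiv.Perm (Fin n)) (i p : ℕ) : ℕ :=
  if 1 ≤ p ∧ p ≤ i then
    ((Icc 1 i).filter fun j => patternRank σ₀ i j = i + 1 - patternRank σ₀ i p).sum id
  else p

lemma p0_out (σ₀ : Equiv.Perm (Fin n)) {i p : ℕ} (hp : ¬(1 ≤ p ∧ p ≤ i)) :
    p0 σ₀ i p = p := if_neg hp

lemma p0_spec (σ₀ : Equiv.Perm (Fin n)) {i p : ℕ} (hin : i ≤ n) (hp : p ∈ Icc 1 i) :
    p0 σ₀ i p ∈ Icc 1 i ∧ patternRank σ₀ i (p0 σ₀ i p) = i + 1 - patternRank σ₀ i p := by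
  have hpm := mem_Icc.1 hp
  have hpr := mem_Icc.1 (pr_mem σ₀ hp)
  have hv : i + 1 - patternRank σ₀ i p ∈ Icc 1 i := by
    rw [mem_Icc]; omega
  obtain ⟨j, hj, hjv⟩ := pr_surj σ₀ hin hv
  have hsingle : ((Icc 1 i).filter fun a => patternRank σ₀ i a = i + 1 - patternRank σ₀ i p)
      = {j} := by
    apply Finset.eq_singleton_iff_unique_mem.2
    refine ⟨mem_filter.2 ⟨hj, hjv⟩, ?_⟩
    intro a ha
    have ha' := mem_filter.1 ha
    exact pr_inj σ₀ hin ha'.1 hj (by rw [ha'.2, hjv])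
  have : p0 σ₀ i p = j := by
    rw [p0, if_pos hpm, hsingle, Finset.sum_singleton, id]
  rw [this]
  exact ⟨hj, hjv⟩

lemma p0_invol (σ₀ : Equiv.Perm (Fin n)) {i : ℕ} (hin : i ≤ n) (p : ℕ) :
    p0 σ₀ i (p0 σ₀ i p) = p := by
  by_cases hp : 1 ≤ p ∧ p ≤ i
  · have hp' : p ∈ Icc 1 i := mem_Icc.2 hp
    obtain ⟨h1, h2⟩ := p0_spec σ₀ hin hp'
    obtain ⟨h3, h4⟩ := p0_spec σ₀ hin h1
    have hpr := mem_Icc.1 (pr_mem σ₀ hp')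
    have : patternRank σ₀ i (p0 σ₀ i (p0 σ₀ i p)) = patternRank σ₀ i p := by
      rw [h4, h2]; omega
    exact pr_inj σ₀ hin h3 hp' this
  · rw [p0_out σ₀ hp, p0_out σ₀ hp]

lemma p0_one_le (σ₀ : Equiv.Perm (Fin n)) {i : ℕ} (hin : i ≤ n) (p : ℕ) (hp : 1 ≤ p) :
    1 ≤ p0 σ₀ i p ∧ (p0 σ₀ i p ≤ max p i) := by
  by_cases h : 1 ≤ p ∧ p ≤ i
  · have := (mem_Icc.1 (p0_spec σ₀ hin (mem_Icc.2 h)).1)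
    omega
  · rw [p0_out σ₀ h]; omega

/-- position permutation realizing the complement of the pattern of `σ₀` on `[1,i]`
(1-based positions; as a permutation of 0-based `Fin n`). -/
def pperm {n : ℕ} (σ₀ : Equiv.Perm (Fin n)) (i : ℕ) (hin : i ≤ n) : Equiv.Perm (Fin n) where
  toFun p := ⟨p0 σ₀ i (p + 1) - 1, by
    have h := p0_one_le σ₀ hin (p + 1) (by omega)
    have := p.isLt
    omega⟩
  invFun p := ⟨p0 σ₀ i (p + 1) - 1, by
    have h := p0_one_le σ₀ hin (p + 1) (by omega)
    have := p.isLt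
    omega⟩
  left_inv p := by
    apply Fin.ext
    have h1 := p0_one_le σ₀ hin (p + 1) (by omega)
    show p0 σ₀ i (p0 σ₀ i (p + 1) - 1 + 1) - 1 = (p : ℕ)
    rw [Nat.sub_add_cancel h1.1, p0_invol σ₀ hin]; omega
  right_inv p := by
    apply Fin.ext
    have h1 := p0_one_le σ₀ hin (p + 1) (by omega)
    show p0 σ₀ i (p0 σ₀ i (p + 1) - 1 + 1) - 1 = (p : ℕ)
    rw [Nat.sub_add_cancel h1.1, p0_invol σ₀ hin]; omega

lemma pperm_mul_self (σ₀ : Equiv.Perm (Fin n)) {i : ℕ} (hin : i ≤ n) :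
    pperm σ₀ i hin * pperm σ₀ i hin = 1 := by
  apply Equiv.ext
  intro p
  exact (pperm σ₀ i hin).left_inv p

lemma rnk_mul_pperm (σ₀ σ : Equiv.Perm (Fin n)) {i j : ℕ} (hin : i ≤ n)
    (h1 : 1 ≤ j) (h2 : j ≤ n) :
    rnk (σ * pperm σ₀ i hin) j = rnk σ (p0 σ₀ i j) := by
  have hj : j - 1 < n := by omega
  have hp := p0_one_le σ₀ hin j h1
  have hj' : p0 σ₀ i j - 1 < n := by omega
  have harg : (pperm σ₀ i hin) ⟨j - 1, hj⟩ = ⟨p0 σ₀ i j - 1, hj'⟩ := by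
    apply Fin.ext
    show p0 σ₀ i (j - 1 + 1) - 1 = p0 σ₀ i j - 1
    rw [Nat.sub_add_cancel h1]
  simp only [rnk, dif_pos hj, dif_pos hj', Equiv.Perm.mul_apply, harg]



variable {n : ℕ}

lemma pattern_rev (σ : Equiv.Perm (Fin n)) {i j : ℕ} (hin : i ≤ n) (hj : j ∈ Icc 1 i) :
    patternRank (Fin.revPerm * σ) i j = i + 1 - patternRank σ i j := by
  have hjm := mem_Icc.1 hj
  have hbj := rnk_bounds σ (j := j) (by omega) (by omega)
  have : ((Icc 1 i).filter fun j' => rnk (Fin.revPerm * σ) j' ≤ rnk (Fin.revPerm * σ) j)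
      = (Icc 1 i).filter fun j' => rnk σ j ≤ rnk σ j' := by
    apply Finset.filter_congr
    intro a ha
    have ham := mem_Icc.1 ha
    have hba := rnk_bounds σ (j := a) (by omega) (by omega)
    rw [rnk_rev σ (by omega) (by omega), rnk_rev σ (j := j) (by omega) (by omega)]
    constructor <;> intro h <;> omega
  rw [patternRank, this, pr_compl σ hin hj]

lemma pattern_mul_pperm (σ₀ σ : Equiv.Perm (Fin n)) {i j : ℕ} (hin : i ≤ n) (hj : j ∈ Icc 1 i) :
    patternRank (σ * pperm σ₀ i hin) i j = patternRank σ i (p0 σ₀ i j) := by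
  have hjm := mem_Icc.1 hj
  have hstep : ((Icc 1 i).filter fun j' =>
        rnk (σ * pperm σ₀ i hin) j' ≤ rnk (σ * pperm σ₀ i hin) j)
      = (Icc 1 i).filter fun j' => rnk σ (p0 σ₀ i j') ≤ rnk σ (p0 σ₀ i j) := by
    apply Finset.filter_congr
    intro a ha
    have ham := mem_Icc.1 ha
    rw [rnk_mul_pperm σ₀ σ hin (by omega) (by omega),
        rnk_mul_pperm σ₀ σ hin (j := j) (by omega) (by omega)]
  rw [patternRank, hstep, patternRank]
  apply Finset.card_bij' (fun a _ => p0 σ₀ i a) (fun a _ => p0 σ₀ i a)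
  · intro a ha
    have ha' := mem_filter.1 ha
    exact mem_filter.2 ⟨(p0_spec σ₀ hin ha'.1).1, ha'.2⟩
  · intro a ha
    have ha' := mem_filter.1 ha
    refine mem_filter.2 ⟨(p0_spec σ₀ hin ha'.1).1, ?_⟩
    rw [p0_invol σ₀ hin]
    exact ha'.2
  · intro a _
    exact p0_invol σ₀ hin a
  · intro a _
    exact p0_invol σ₀ hin a



variable {n : ℕ}

lemma revPerm_mul_self : (Fin.revPerm : Equiv.Perm (Fin n)) * Fin.revPerm = 1 := by
  apply Equiv.ext
  intro p
  simp [Fin.rev_rev]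

lemma class_sum_nonneg {i : ℕ} (hi1 : 1 ≤ i) (hin : i + 1 ≤ n) (σ₀ : Equiv.Perm (Fin n))
    (hx : 2 * relRank σ₀ i ≤ i + 1) (C : Finset (Equiv.Perm (Fin n)))
    (hC : ∀ σ, σ ∈ C ↔ ∀ j ∈ Icc 1 i, patternRank σ i j = patternRank σ₀ i j) :
    0 ≤ ∑ σ ∈ C, ((rnk σ (i + 1) : ℝ) - rnk σ i) := by
  have hin' : i ≤ n := by omega
  set f : Equiv.Perm (Fin n) → ℝ := fun σ => ((rnk σ (i + 1) : ℝ) - rnk σ i) with hf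
  set Θ : Equiv.Perm (Fin n) → Equiv.Perm (Fin n) :=
    fun σ => Fin.revPerm * (σ * pperm σ₀ i hin') with hΘ
  have hii : i ∈ Icc 1 i := mem_Icc.2 ⟨hi1, le_refl i⟩
  have hp0i := p0_spec σ₀ hin' hii
  have hxpr : relRank σ₀ i = patternRank σ₀ i i := rfl
  -- Θ maps C to C
  have hmem : ∀ σ ∈ C, Θ σ ∈ C := by
    intro σ hσ
    have hσ' := (hC σ).1 hσ
    refine (hC _).2 ?_
    intro j hj
    have hjm := mem_Icc.1 hj
    have hprj := mem_Icc.1 (pr_mem σ₀ hj)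
    have hp0j := p0_spec σ₀ hin' hj
    have hprp0 := mem_Icc.1 (pr_mem σ₀ hp0j.1)
    rw [hΘ]
    rw [pattern_rev (σ * pperm σ₀ i hin') hin' hj, pattern_mul_pperm σ₀ σ hin' hj,
      hσ' _ hp0j.1, hp0j.2]
    omega
  -- Θ is an involution
  have hinvol : ∀ σ, Θ (Θ σ) = σ := by
    intro σ
    show Fin.revPerm * (Fin.revPerm * (σ * pperm σ₀ i hin') * pperm σ₀ i hin') = σ
    rw [mul_assoc Fin.revPerm (σ * pperm σ₀ i hin') (pperm σ₀ i hin')]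
    rw [mul_assoc σ, pperm_mul_self σ₀ hin', mul_one]
    rw [← mul_assoc, revPerm_mul_self, one_mul]
  -- reindexing
  have hre : ∑ σ ∈ C, f (Θ σ) = ∑ σ ∈ C, f σ := by
    apply Finset.sum_bij' (fun a _ => Θ a) (fun a _ => Θ a) hmem hmem
    · intro a _; exact hinvol a
    · intro a _; exact hinvol a
    · intro a _; rfl
  -- pointwise positivity of paired sum
  have hpair : ∀ σ ∈ C, f σ + f (Θ σ) = (rnk σ (p0 σ₀ i i) : ℝ) - rnk σ i := by
    intro σ hσ
    have h1 : rnk (Θ σ) (i + 1) = n + 1 - rnk σ (i + 1) := by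
      rw [hΘ]
      rw [rnk_rev (σ * pperm σ₀ i hin') (by omega) (by omega),
        rnk_mul_pperm σ₀ σ hin' (by omega) (by omega),
        p0_out σ₀ (by omega)]
    have h2 : rnk (Θ σ) i = n + 1 - rnk σ (p0 σ₀ i i) := by
      rw [hΘ]
      rw [rnk_rev (σ * pperm σ₀ i hin') (by omega) (by omega),
        rnk_mul_pperm σ₀ σ (j := i) hin' (by omega) (by omega)]
    have hb1 := rnk_bounds σ (j := i + 1) (by omega) (by omega)
    have hp0m := mem_Icc.1 hp0i.1
    have hb2 := rnk_bounds σ (j := p0 σ₀ i i) (by omega) (by omega)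
    rw [hf]
    simp only []
    rw [h1, h2]
    have c1 : ((n + 1 - rnk σ (i + 1) : ℕ) : ℝ) = (n : ℝ) + 1 - rnk σ (i + 1) := by
      push_cast [Nat.cast_sub (by omega : rnk σ (i+1) ≤ n + 1)]
      ring
    have c2 : ((n + 1 - rnk σ (p0 σ₀ i i) : ℕ) : ℝ) = (n : ℝ) + 1 - rnk σ (p0 σ₀ i i) := by
      push_cast [Nat.cast_sub (by omega : rnk σ (p0 σ₀ i i) ≤ n + 1)]
      ring
    rw [c1, c2]
    ring
  have hpos : ∀ σ ∈ C, 0 ≤ f σ + f (Θ σ) := by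
    intro σ hσ
    rw [hpair σ hσ]
    have hσ' := (hC σ).1 hσ
    have hle : rnk σ i ≤ rnk σ (p0 σ₀ i i) := by
      rw [← pr_le_iff σ hin' hii hp0i.1]
      rw [hσ' _ hii, hσ' _ hp0i.1, hp0i.2, ← hxpr]
      have := mem_Icc.1 (pr_mem σ₀ hii)
      rw [← hxpr] at this
      omega
    have : (rnk σ i : ℝ) ≤ rnk σ (p0 σ₀ i i) := by exact_mod_cast hle
    linarith
  have htot : 0 ≤ ∑ σ ∈ C, (f σ + f (Θ σ)) := Finset.sum_nonneg hpos
  rw [Finset.sum_add_distrib, hre] at htot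
  linarith


variable {n : ℕ}

lemma rev_invol (σ : Equiv.Perm (Fin n)) :
    Fin.revPerm * (Fin.revPerm * σ) = σ := by
  rw [← mul_assoc, revPerm_mul_self, one_mul]

lemma class_sum_nonpos {i : ℕ} (hi1 : 1 ≤ i) (hin : i + 1 ≤ n) (σ₀ : Equiv.Perm (Fin n))
    (hx : i + 1 ≤ 2 * relRank σ₀ i) (C : Finset (Equiv.Perm (Fin n)))
    (hC : ∀ σ, σ ∈ C ↔ ∀ j ∈ Icc 1 i, patternRank σ i j = patternRank σ₀ i j) :
    ∑ σ ∈ C, ((rnk σ (i + 1) : ℝ) - rnk σ i) ≤ 0 := by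
  classical
  have hin' : i ≤ n := by omega
  set σ₁ := Fin.revPerm * σ₀ with hσ₁
  set C' := C.image (fun σ => Fin.revPerm * σ) with hC'
  have hmemC' : ∀ σ, σ ∈ C' ↔ Fin.revPerm * σ ∈ C := by
    intro σ
    rw [hC']
    constructor
    · intro h
      obtain ⟨τ, hτ, hτ2⟩ := Finset.mem_image.1 h
      rw [← hτ2, rev_invol]
      exact hτ
    · intro h
      exact Finset.mem_image.2 ⟨Fin.revPerm * σ, h, rev_invol σ⟩
  have hC'' : ∀ σ, σ ∈ C' ↔ ∀ j ∈ Icc 1 i, patternRank σ i j = patternRank σ₁ i j := by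
    intro σ
    rw [hmemC', hC]
    constructor
    · intro h j hj
      have h1 := h j hj
      rw [pattern_rev σ hin' hj] at h1
      rw [hσ₁, pattern_rev σ₀ hin' hj]
      have b1 := mem_Icc.1 (pr_mem σ hj)
      have b2 := mem_Icc.1 (pr_mem σ₀ hj)
      omega
    · intro h j hj
      have h1 := h j hj
      rw [hσ₁, pattern_rev σ₀ hin' hj] at h1
      rw [pattern_rev σ hin' hj]
      have b1 := mem_Icc.1 (pr_mem σ hj)
      have b2 := mem_Icc.1 (pr_mem σ₀ hj)
      omega
  have hii : i ∈ Icc 1 i := mem_Icc.2 ⟨hi1, le_refl i⟩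
  have hx1 : 2 * relRank σ₁ i ≤ i + 1 := by
    have : relRank σ₁ i = patternRank σ₁ i i := rfl
    have h2 : patternRank σ₁ i i = i + 1 - patternRank σ₀ i i := by
      rw [hσ₁]; exact pattern_rev σ₀ hin' hii
    have hb := mem_Icc.1 (pr_mem σ₀ hii)
    have hx' : relRank σ₀ i = patternRank σ₀ i i := rfl
    omega
  have hpos := class_sum_nonneg hi1 hin σ₁ hx1 C' hC''
  have hflip : ∑ σ ∈ C, ((rnk σ (i + 1) : ℝ) - rnk σ i)
      = - ∑ σ ∈ C', ((rnk σ (i + 1) : ℝ) - rnk σ i) := by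
    rw [← Finset.sum_neg_distrib]
    refine Finset.sum_bij' (i := fun a _ => Fin.revPerm * a) (j := fun a _ => Fin.revPerm * a)
      (hi := fun a ha => (hmemC' _).2 (by rwa [rev_invol]))
      (hj := fun a ha => (hmemC' a).1 ha)
      (left_neg := fun a _ => rev_invol a)
      (right_neg := fun a _ => rev_invol a)
      (h := ?_)
    · intro a ha
      have hb1 := rnk_bounds a (j := i + 1) (by omega) (by omega)
      have hb2 := rnk_bounds a (j := i) (by omega) (by omega)
      rw [rnk_rev a (by omega : 1 ≤ i + 1) (by omega), rnk_rev a (j := i) (by omega) (by omega)]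
      have c1 : ((n + 1 - rnk a (i + 1) : ℕ) : ℝ) = (n : ℝ) + 1 - rnk a (i + 1) := by
        push_cast [Nat.cast_sub (by omega : rnk a (i + 1) ≤ n + 1)]; ring
      have c2 : ((n + 1 - rnk a i : ℕ) : ℝ) = (n : ℝ) + 1 - rnk a i := by
        push_cast [Nat.cast_sub (by omega : rnk a i ≤ n + 1)]; ring
      rw [c1, c2]; ring
  rw [hflip]
  linarith



variable {n : ℕ}

lemma relRank_congr {i : ℕ} (hin : i ≤ n) (σ σ' : Equiv.Perm (Fin n))
    (h : ∀ j ∈ Icc 1 i, patternRank σ i j = patternRank σ' i j)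
    {m : ℕ} (hm : m ≤ i) : relRank σ m = relRank σ' m := by
  rcases Nat.eq_zero_or_pos m with rfl | hm1
  · simp [relRank, rnk]
  have hmIcc : m ∈ Icc 1 i := mem_Icc.2 ⟨hm1, hm⟩
  unfold relRank
  have : (Icc 1 m).filter (fun j => rnk σ j ≤ rnk σ m)
      = (Icc 1 m).filter (fun j => rnk σ' j ≤ rnk σ' m) := by
    apply Finset.filter_congr
    intro a ha
    have ham := mem_Icc.1 ha
    have haIcc : a ∈ Icc 1 i := mem_Icc.2 ⟨ham.1, le_trans ham.2 hm⟩
    rw [← pr_le_iff σ hin haIcc hmIcc, ← pr_le_iff σ' hin haIcc hmIcc,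
      h a haIcc, h m hmIcc]
  rw [this]

lemma opActive_congr {i : ℕ} (hin : i ≤ n) (σ σ' : Equiv.Perm (Fin n))
    (h : ∀ j ∈ Icc 1 i, patternRank σ i j = patternRank σ' i j) :
    ∀ m, m ≤ i → opActive σ m = opActive σ' m := by
  intro m
  induction m with
  | zero => intro _; rfl
  | succ k ih =>
    intro hk
    have h1 : relRank σ (k + 1) = relRank σ' (k + 1) := relRank_congr hin σ σ' h hk
    have h2 : opActive σ k = opActive σ' k := ih (by omega)
    simp only [opActive, h1, h2]

lemma opActive_le {i : ℕ} (σ : Equiv.Perm (Fin n)) (hi1 : 1 ≤ i)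
    (h : opActive σ i = true) : 2 * relRank σ i ≤ i + 1 := by
  cases i with
  | zero => omega
  | succ m =>
    simp only [opActive, Bool.or_eq_true, decide_eq_true_eq, Bool.and_eq_true] at h
    rcases h with h | ⟨⟨h, _⟩, _⟩ <;> omega

lemma opActive_ge {i : ℕ} (σ : Equiv.Perm (Fin n)) (hi1 : 1 ≤ i)
    (h : opActive σ i = false) : i + 1 ≤ 2 * relRank σ i := by
  cases i with
  | zero => omega
  | succ m =>
    simp only [opActive, Bool.or_eq_false_iff, decide_eq_false_iff_not] at h
    omega


end Stmt17Aux

open Stmt17Aux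

open scoped Classical in
/-- For `n ≥ 2` and `1 ≤ i ≤ n−1`, the expected amortized profit of any holding set `L` of
permutations of `{1,…,i}` on interval `i` is at most that of algorithm OP on interval `i`. -/
theorem stmt17 (n i : ℕ) (hn : 2 ≤ n) (hi1 : 1 ≤ i) (hi2 : i ≤ n - 1)
    (L : Finset (Equiv.Perm (Fin i))) :
    (∑ σ : Equiv.Perm (Fin n),
        if ∃ ρ ∈ L, ∀ j ∈ Finset.Icc 1 i, patternRank σ i j = rnk ρ j
        then ((rnk σ (i + 1) : ℝ) - rnk σ i) else 0) / (n.factorial : ℝ)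
      ≤ (∑ σ : Equiv.Perm (Fin n),
          if opActive σ i then ((rnk σ (i + 1) : ℝ) - rnk σ i) else 0) /
          (n.factorial : ℝ) := by
  have hin2 : i + 1 ≤ n := by omega
  have hin' : i ≤ n := by omega
  have hfac : (0 : ℝ) < n.factorial := by positivity
  gcongr ?S / _
  have hkeybound : ∀ (σ : Equiv.Perm (Fin n)) (j : Fin i),
      patternRank σ i ((j : ℕ) + 1) - 1 < i := by
    intro σ j
    have hj : (j : ℕ) + 1 ∈ Icc 1 i := mem_Icc.2 ⟨by omega, by omega⟩
    have := mem_Icc.1 (pr_mem σ hj)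
    omega
  set key : Equiv.Perm (Fin n) → (Fin i → Fin i) :=
    fun σ j => ⟨patternRank σ i ((j : ℕ) + 1) - 1, hkeybound σ j⟩ with hkey
  rw [← Finset.sum_fiberwise univ key (fun σ =>
        if ∃ ρ ∈ L, ∀ j ∈ Finset.Icc 1 i, patternRank σ i j = rnk ρ j
        then ((rnk σ (i + 1) : ℝ) - rnk σ i) else 0),
      ← Finset.sum_fiberwise univ key (fun σ =>
        if opActive σ i then ((rnk σ (i + 1) : ℝ) - rnk σ i) else 0)]
  apply Finset.sum_le_sum
  intro b _
  set Cb := univ.filter (fun σ => key σ = b) with hCb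
  rcases Cb.eq_empty_or_nonempty with he | hne
  · rw [he]; simp
  obtain ⟨σ₀, hσ₀⟩ := hne
  have hb : key σ₀ = b := (mem_filter.1 hσ₀).2
  have hsame : ∀ σ ∈ Cb, ∀ j ∈ Icc 1 i, patternRank σ i j = patternRank σ₀ i j := by
    intro σ hσ j hj
    have h1 : key σ = key σ₀ := by rw [(mem_filter.1 hσ).2, hb]
    have hjm := mem_Icc.1 hj
    have h2 := congrArg Fin.val (congrFun h1 ⟨j - 1, by omega⟩)
    simp only [hkey] at h2
    have hjj : j - 1 + 1 = j := by omega
    rw [hjj] at h2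
    have b1 := mem_Icc.1 (pr_mem σ hj)
    have b2 := mem_Icc.1 (pr_mem σ₀ hj)
    omega
  have hCbiff : ∀ σ, σ ∈ Cb ↔ ∀ j ∈ Icc 1 i, patternRank σ i j = patternRank σ₀ i j := by
    intro σ
    constructor
    · exact hsame σ
    · intro h
      refine mem_filter.2 ⟨mem_univ _, ?_⟩
      rw [← hb]
      funext j
      apply Fin.ext
      simp only [hkey]
      rw [h ((j : ℕ) + 1) (mem_Icc.2 ⟨by omega, by omega⟩)]
  cases ha : opActive σ₀ i with
  | false =>
    have hS : ∑ σ ∈ Cb, ((rnk σ (i + 1) : ℝ) - rnk σ i) ≤ 0 :=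
      class_sum_nonpos hi1 hin2 σ₀ (opActive_ge σ₀ hi1 ha) Cb hCbiff
    have hR : ∑ σ ∈ Cb, (if opActive σ i then ((rnk σ (i + 1) : ℝ) - rnk σ i) else 0) = 0 := by
      apply Finset.sum_eq_zero
      intro σ hσ
      rw [if_neg]
      rw [opActive_congr hin' σ σ₀ (hsame σ hσ) i (le_refl i), ha]
      simp
    rw [hR]
    by_cases hp : ∃ ρ ∈ L, ∀ j ∈ Finset.Icc 1 i, patternRank σ₀ i j = rnk ρ j
    · have hL : ∑ σ ∈ Cb, (if ∃ ρ ∈ L, ∀ j ∈ Finset.Icc 1 i, patternRank σ i j = rnk ρ j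
          then ((rnk σ (i + 1) : ℝ) - rnk σ i) else 0)
          = ∑ σ ∈ Cb, ((rnk σ (i + 1) : ℝ) - rnk σ i) := by
        apply Finset.sum_congr rfl
        intro σ hσ
        rw [if_pos]
        obtain ⟨ρ, hρ, h2⟩ := hp
        exact ⟨ρ, hρ, fun j hj => by rw [hsame σ hσ j hj]; exact h2 j hj⟩
      rw [hL]
      exact hS
    · have hL : ∑ σ ∈ Cb, (if ∃ ρ ∈ L, ∀ j ∈ Finset.Icc 1 i, patternRank σ i j = rnk ρ j
          then ((rnk σ (i + 1) : ℝ) - rnk σ i) else 0) = 0 := by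
        apply Finset.sum_eq_zero
        intro σ hσ
        rw [if_neg]
        intro ⟨ρ, hρ, h2⟩
        exact hp ⟨ρ, hρ, fun j hj => by rw [← hsame σ hσ j hj]; exact h2 j hj⟩
      rw [hL]
  | true =>
    have hS : 0 ≤ ∑ σ ∈ Cb, ((rnk σ (i + 1) : ℝ) - rnk σ i) :=
      class_sum_nonneg hi1 hin2 σ₀ (opActive_le σ₀ hi1 ha) Cb hCbiff
    have hR : ∑ σ ∈ Cb, (if opActive σ i then ((rnk σ (i + 1) : ℝ) - rnk σ i) else 0)
        = ∑ σ ∈ Cb, ((rnk σ (i + 1) : ℝ) - rnk σ i) := by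
      apply Finset.sum_congr rfl
      intro σ hσ
      rw [if_pos]
      rw [opActive_congr hin' σ σ₀ (hsame σ hσ) i (le_refl i), ha]
    rw [hR]
    by_cases hp : ∃ ρ ∈ L, ∀ j ∈ Finset.Icc 1 i, patternRank σ₀ i j = rnk ρ j
    · have hL : ∑ σ ∈ Cb, (if ∃ ρ ∈ L, ∀ j ∈ Finset.Icc 1 i, patternRank σ i j = rnk ρ j
          then ((rnk σ (i + 1) : ℝ) - rnk σ i) else 0)
          = ∑ σ ∈ Cb, ((rnk σ (i + 1) : ℝ) - rnk σ i) := by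
        apply Finset.sum_congr rfl
        intro σ hσ
        rw [if_pos]
        obtain ⟨ρ, hρ, h2⟩ := hp
        exact ⟨ρ, hρ, fun j hj => by rw [hsame σ hσ j hj]; exact h2 j hj⟩
      rw [hL]
    · have hL : ∑ σ ∈ Cb, (if ∃ ρ ∈ L, ∀ j ∈ Finset.Icc 1 i, patternRank σ i j = rnk ρ j
          then ((rnk σ (i + 1) : ℝ) - rnk σ i) else 0) = 0 := by
        apply Finset.sum_eq_zero
        intro σ hσ
        rw [if_neg]
        intro ⟨ρ, hρ, h2⟩
        exact hp ⟨ρ, hρ, fun j hj => by rw [← hsame σ hσ j hj]; exact h2 j hj⟩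
      rw [hL]
      exact hS
end

section
/- Algorithm OP is optimal for multiple low/high pair selection: for n ≥ 2 and every family (L_i)_{i=1}^{n−1}, where each L_i is a set of permutations of {1,…,i}, the expected profit E[ Σ_{i=1}^{n−1} (σ(i+1) − σ(i)) · 1{pattern_i(σ) ∈ L_i} ] is at most E[P_OP]. -/
open Finset

namespace OP18
open Equiv
open scoped Classical

variable {n : ℕ}

lemma rnk_eq (σ : Perm (Fin n)) {j : ℕ} (h : j - 1 < n) : rnk σ j = (σ ⟨j - 1, h⟩ : ℕ) + 1 :=
  dif_pos h

lemma sub_lt_of_mem {j m : ℕ} (hj : j ∈ Icc 1 m) (hm : m ≤ n) : j - 1 < n := by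
  simp only [mem_Icc] at hj; omega

lemma rnk_injOn (σ : Perm (Fin n)) {j k : ℕ} (hj : j ∈ Icc 1 n) (hk : k ∈ Icc 1 n)
    (h : rnk σ j = rnk σ k) : j = k := by
  have hj' : j - 1 < n := sub_lt_of_mem hj le_rfl
  have hk' : k - 1 < n := sub_lt_of_mem hk le_rfl
  rw [rnk_eq σ hj', rnk_eq σ hk'] at h
  have h2 : σ ⟨j-1,hj'⟩ = σ ⟨k-1,hk'⟩ := Fin.val_injective (by omega)
  have h3 : (⟨j-1,hj'⟩ : Fin n) = ⟨k-1,hk'⟩ := σ.injective h2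
  have h4 : j - 1 = k - 1 := congrArg Fin.val h3
  simp only [mem_Icc] at hj hk
  omega

lemma rnk_le (σ : Perm (Fin n)) (j : ℕ) : rnk σ j ≤ n := by
  unfold rnk; split
  · exact Nat.succ_le_of_lt (Fin.is_lt _)
  · omega

variable (i : ℕ)

/-- The profit increment for interval `i`. -/
noncomputable def dlt (σ : Perm (Fin n)) : ℝ := (rnk σ (i + 1) : ℝ) - rnk σ i

/-- The prefix pattern of length `i` as a function `ℕ → ℕ` (0 outside `[1,i]`). -/
def pat (σ : Perm (Fin n)) : ℕ → ℕ := fun j => if j ∈ Icc 1 i then patternRank σ i j else 0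

noncomputable def fib (p : ℕ → ℕ) : Finset (Perm (Fin n)) :=
  Finset.univ.filter fun σ => pat i σ = p

noncomputable def Kp (p : ℕ → ℕ) : ℝ := ∑ σ ∈ fib (n := n) i p, dlt i σ

variable {i}

lemma patternRank_mem (σ : Perm (Fin n)) {j : ℕ} (hj : j ∈ Icc 1 i) :
    patternRank σ i j ∈ Icc 1 i := by
  unfold patternRank
  rw [mem_Icc]
  constructor
  · have : j ∈ (Icc 1 i).filter fun j' => rnk σ j' ≤ rnk σ j := by
      simp only [mem_filter]; exact ⟨hj, le_rfl⟩
    have := Finset.card_pos.mpr ⟨j, this⟩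
    omega
  · calc ((Icc 1 i).filter fun j' => rnk σ j' ≤ rnk σ j).card ≤ (Icc 1 i).card :=
          Finset.card_filter_le _ _
      _ = i := by rw [Nat.card_Icc]; omega

lemma Icc_subset' (hin : i ≤ n) : Icc 1 i ⊆ Icc 1 n := Finset.Icc_subset_Icc le_rfl hin

lemma patternRank_le_iff (hin : i ≤ n) (σ : Perm (Fin n)) {j k : ℕ}
    (hj : j ∈ Icc 1 i) (hk : k ∈ Icc 1 i) :
    patternRank σ i k ≤ patternRank σ i j ↔ rnk σ k ≤ rnk σ j := by
  constructor
  · intro h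
    by_contra hlt
    push_neg at hlt
    -- rnk σ j < rnk σ k, show patternRank j < patternRank k
    have hsub : ((Icc 1 i).filter fun j' => rnk σ j' ≤ rnk σ j) ⊆
        ((Icc 1 i).filter fun j' => rnk σ j' ≤ rnk σ k) := by
      intro a ha
      simp only [mem_filter] at ha ⊢
      exact ⟨ha.1, le_trans ha.2 (le_of_lt hlt)⟩
    have hmem : k ∈ (Icc 1 i).filter fun j' => rnk σ j' ≤ rnk σ k := by
      simp only [mem_filter]; exact ⟨hk, le_rfl⟩
    have hnmem : k ∉ (Icc 1 i).filter fun j' => rnk σ j' ≤ rnk σ j := by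
      simp only [mem_filter]; intro hh; exact absurd hh.2 (not_le.mpr hlt)
    have := Finset.card_lt_card (Finset.ssubset_iff_of_subset hsub |>.mpr ⟨k, hmem, hnmem⟩)
    unfold patternRank at h
    omega
  · intro h
    apply Finset.card_le_card
    intro a ha
    simp only [mem_filter] at ha ⊢
    exact ⟨ha.1, le_trans ha.2 h⟩

lemma patternRank_injOn (hin : i ≤ n) (σ : Perm (Fin n)) {j k : ℕ}
    (hj : j ∈ Icc 1 i) (hk : k ∈ Icc 1 i) (h : patternRank σ i j = patternRank σ i k) : j = k := by
  have h1 : rnk σ j ≤ rnk σ k := (patternRank_le_iff hin σ hk hj).mp h.le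
  have h2 : rnk σ k ≤ rnk σ j := (patternRank_le_iff hin σ hj hk).mp h.ge
  exact rnk_injOn σ (Icc_subset' hin hj) (Icc_subset' hin hk) (le_antisymm h1 h2)

lemma exists_pos (hin : i ≤ n) (σ : Perm (Fin n)) {y : ℕ} (hy : y ∈ Icc 1 i) :
    ∃ j ∈ Icc 1 i, patternRank σ i j = y := by
  have := Finset.surj_on_of_inj_on_of_card_le (s := Icc 1 i) (t := Icc 1 i)
    (fun j _ => patternRank σ i j) (fun j hj => patternRank_mem σ hj)
    (fun j k hj hk h => patternRank_injOn hin σ hj hk h) le_rfl y hy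
  obtain ⟨j, hj, hjy⟩ := this
  exact ⟨j, hj, hjy.symm⟩

variable (i) in
/-- Position of the `y`-th order statistic among the first `i` inputs. -/
noncomputable def pos (σ : Perm (Fin n)) (y : ℕ) : ℕ :=
  if h : ∃ j ∈ Icc 1 i, patternRank σ i j = y then h.choose else 1

lemma pos_spec (hin : i ≤ n) (σ : Perm (Fin n)) {y : ℕ} (hy : y ∈ Icc 1 i) :
    pos i σ y ∈ Icc 1 i ∧ patternRank σ i (pos i σ y) = y := by
  have h := exists_pos hin σ hy
  rw [pos, dif_pos h]
  exact h.choose_spec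

lemma pos_patternRank (hin : i ≤ n) (σ : Perm (Fin n)) {j : ℕ} (hj : j ∈ Icc 1 i) :
    pos i σ (patternRank σ i j) = j := by
  obtain ⟨h1, h2⟩ := pos_spec hin σ (patternRank_mem σ hj)
  exact patternRank_injOn hin σ h1 hj h2

/-- 1-based position map induced by a permutation `τ` of positions. -/
def Tm (τ : Perm (Fin n)) (k : ℕ) : ℕ :=
  if h : k - 1 < n then (τ ⟨k - 1, h⟩ : ℕ) + 1 else k

lemma rnk_trans (σ τ : Perm (Fin n)) {k : ℕ} (h : k - 1 < n) :
    rnk (τ.trans σ) k = rnk σ (Tm τ k) := by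
  rw [rnk_eq (τ.trans σ) h, Tm, dif_pos h]
  have h2 : (τ ⟨k - 1, h⟩ : ℕ) + 1 - 1 < n := by simpa using (τ ⟨k - 1, h⟩).is_lt
  rw [rnk_eq σ h2]
  simp [Equiv.trans_apply]

section TauProps

variable {τ : Perm (Fin n)} (hfix : ∀ a : Fin n, i ≤ (a : ℕ) → τ a = a)
  (hlo : ∀ a : Fin n, (a : ℕ) < i → ((τ a : Fin n) : ℕ) < i) (hin : i ≤ n)

include hlo hin in
lemma Tm_mem {k : ℕ} (hk : k ∈ Icc 1 i) : Tm τ k ∈ Icc 1 i := by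
  have h : k - 1 < n := sub_lt_of_mem hk hin
  rw [Tm, dif_pos h, mem_Icc]
  simp only [mem_Icc] at hk
  have := hlo ⟨k - 1, h⟩ (by simp; omega)
  omega

include hfix hlo in
lemma symm_lo : ∀ a : Fin n, (a : ℕ) < i → ((τ.symm a : Fin n) : ℕ) < i := by
  intro a ha
  by_contra hge
  push_neg at hge
  have h1 := hfix (τ.symm a) hge
  rw [Equiv.apply_symm_apply] at h1
  rw [← h1] at hge
  omega

lemma Tm_symm_Tm {k : ℕ} (hk1 : 1 ≤ k) (h : k - 1 < n) : Tm τ.symm (Tm τ k) = k := by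
  unfold Tm
  rw [dif_pos h]
  have h2 : (τ ⟨k - 1, h⟩ : ℕ) + 1 - 1 < n := by simpa using (τ ⟨k - 1, h⟩).is_lt
  rw [dif_pos h2]
  have e : (⟨(τ ⟨k - 1, h⟩ : ℕ) + 1 - 1, h2⟩ : Fin n) = τ ⟨k - 1, h⟩ := by
    apply Fin.ext; simp
  rw [e, Equiv.symm_apply_apply]
  show k - 1 + 1 = k
  omega

include hfix hlo hin in
lemma patternRank_trans (σ : Perm (Fin n)) {j : ℕ} (hj : j ∈ Icc 1 i) :
    patternRank (τ.trans σ) i j = patternRank σ i (Tm τ j) := by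
  unfold patternRank
  rw [Finset.filter_congr (fun k hk => by
    rw [rnk_trans σ τ (sub_lt_of_mem hk hin), rnk_trans σ τ (sub_lt_of_mem hj hin)])]
  apply Finset.card_nbij' (Tm τ) (Tm τ.symm)
  · intro k hk
    simp only [mem_coe, mem_filter] at hk ⊢
    exact ⟨Tm_mem hlo hin hk.1, hk.2⟩
  · intro k hk
    simp only [mem_coe, mem_filter] at hk ⊢
    refine ⟨Tm_mem (symm_lo hfix hlo) hin hk.1, ?_⟩
    have h1 : k - 1 < n := sub_lt_of_mem hk.1 hin
    have h2 : 1 ≤ k := by simp only [mem_Icc] at hk; omega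
    calc rnk σ (Tm τ (Tm τ.symm k)) = rnk σ k := by
          rw [show Tm τ (Tm τ.symm k) = k from
            (by simpa using Tm_symm_Tm (τ := τ.symm) h2 h1 : Tm τ.symm.symm (Tm τ.symm k) = k)]
      _ ≤ _ := hk.2
  · intro k hk
    simp only [mem_coe, mem_filter] at hk
    exact Tm_symm_Tm (by simp only [mem_Icc] at hk; omega : 1 ≤ k) (sub_lt_of_mem hk.1 hin)
  · intro k hk
    simp only [mem_coe, mem_filter] at hk
    have h1 : k - 1 < n := sub_lt_of_mem hk.1 hin
    have h2 : 1 ≤ k := by simp only [mem_Icc] at hk; omega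
    simpa using Tm_symm_Tm (τ := τ.symm) h2 h1

variable (i) in
/-- Composition of a pattern with a position map. -/
def pcomp (p : ℕ → ℕ) (τ : Perm (Fin n)) : ℕ → ℕ :=
  fun j => if j ∈ Icc 1 i then p (Tm τ j) else 0

include hfix hlo hin in
lemma pat_trans (σ : Perm (Fin n)) : pat i (τ.trans σ) = pcomp i (pat i σ) τ := by
  funext j
  by_cases hj : j ∈ Icc 1 i
  · rw [pat, if_pos hj, pcomp, if_pos hj, pat, if_pos (Tm_mem hlo hin hj)]
    exact patternRank_trans hfix hlo hin σ hj
  · rw [pat, if_neg hj, pcomp, if_neg hj]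

include hfix hlo hin in
lemma pcomp_cancel {p q : ℕ → ℕ} (hp0 : ∀ j ∉ Icc 1 i, p j = 0) (hq0 : ∀ j ∉ Icc 1 i, q j = 0)
    (h : pcomp i p τ = pcomp i q τ) : p = q := by
  funext j
  by_cases hj : j ∈ Icc 1 i
  · have h2 : 1 ≤ j := by simp only [mem_Icc] at hj; omega
    have h1 : j - 1 < n := sub_lt_of_mem hj hin
    have hj' : Tm τ.symm j ∈ Icc 1 i := Tm_mem (symm_lo hfix hlo) hin hj
    have hTT : Tm τ (Tm τ.symm j) = j := by
      simpa using Tm_symm_Tm (τ := τ.symm) h2 h1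
    have := congrFun h (Tm τ.symm j)
    rwa [pcomp, pcomp, if_pos hj', if_pos hj', hTT] at this
  · rw [hp0 j hj, hq0 j hj]

lemma pat_vanish (σ : Perm (Fin n)) : ∀ j ∉ Icc 1 i, pat i σ j = 0 := fun j hj => if_neg hj

include hfix hlo hin in
lemma fib_trans_sum (p : ℕ → ℕ) (hp0 : ∀ j ∉ Icc 1 i, p j = 0) (f : Perm (Fin n) → ℝ) :
    ∑ σ ∈ fib (n := n) i (pcomp i p τ), f σ = ∑ σ ∈ fib (n := n) i p, f (τ.trans σ) := by
  apply Finset.sum_nbij' (fun σ => τ.symm.trans σ) (fun σ => τ.trans σ)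
  · intro σ hσ
    simp only [fib, mem_filter, mem_univ, true_and] at hσ ⊢
    have hgen : pat i (τ.trans (τ.symm.trans σ)) = pcomp i (pat i (τ.symm.trans σ)) τ :=
      pat_trans hfix hlo hin _
    have : τ.trans (τ.symm.trans σ) = σ := by ext a; simp
    rw [this] at hgen
    rw [hσ] at hgen
    exact pcomp_cancel hfix hlo hin (pat_vanish _) hp0 hgen.symm
  · intro σ hσ
    simp only [fib, mem_filter, mem_univ, true_and] at hσ ⊢
    rw [pat_trans hfix hlo hin, hσ]
  · intro σ _; ext a; simp
  · intro σ _; ext a; simp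
  · intro σ _
    congr 1
    ext a; simp

end TauProps

lemma rnk_rev (σ : Perm (Fin n)) {k : ℕ} (hk : k ∈ Icc 1 n) :
    rnk (σ.trans Fin.revPerm) k = n + 1 - rnk σ k := by
  have h : k - 1 < n := sub_lt_of_mem hk le_rfl
  rw [rnk_eq _ h, rnk_eq σ h]
  simp only [Equiv.trans_apply, Fin.revPerm_apply, Fin.val_rev]
  have := (σ ⟨k - 1, h⟩).is_lt
  omega

lemma rnk_pos (σ : Perm (Fin n)) {k : ℕ} (hk : k ∈ Icc 1 n) : 1 ≤ rnk σ k := by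
  rw [rnk_eq σ (sub_lt_of_mem hk le_rfl)]; omega

variable (i) in
/-- The complement (value-reversed) pattern. -/
def cpl (p : ℕ → ℕ) : ℕ → ℕ := fun j => if j ∈ Icc 1 i then i + 1 - p j else 0

lemma patternRank_rev (hin : i ≤ n) (σ : Perm (Fin n)) {j : ℕ} (hj : j ∈ Icc 1 i) :
    patternRank (σ.trans Fin.revPerm) i j = i + 1 - patternRank σ i j := by
  unfold patternRank
  have hrw : ((Icc 1 i).filter fun k => rnk (σ.trans Fin.revPerm) k ≤ rnk (σ.trans Fin.revPerm) j)
      = (Icc 1 i).filter fun k => rnk σ j ≤ rnk σ k := by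
    apply Finset.filter_congr
    intro k hk
    rw [rnk_rev σ (Icc_subset' hin hk), rnk_rev σ (Icc_subset' hin hj)]
    have h1 := rnk_le σ k
    have h2 := rnk_le σ j
    constructor <;> intro <;> [skip; skip] <;> simp_all <;> omega
  rw [hrw]
  have hpart := Finset.card_filter_add_card_filter_not
    (s := Icc 1 i) (p := fun k => rnk σ j ≤ rnk σ k)
  have hneg : ((Icc 1 i).filter fun k => ¬ rnk σ j ≤ rnk σ k)
      = ((Icc 1 i).filter fun k => rnk σ k ≤ rnk σ j).erase j := by
    ext k
    simp only [mem_filter, mem_erase, not_le]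
    constructor
    · intro ⟨h1, h2⟩
      refine ⟨?_, h1, le_of_lt h2⟩
      intro he; rw [he] at h2; omega
    · intro ⟨hne, h1, h2⟩
      refine ⟨h1, lt_of_le_of_ne h2 ?_⟩
      intro he
      exact hne (rnk_injOn σ (Icc_subset' hin h1) (Icc_subset' hin hj) he)
  have hjmem : j ∈ (Icc 1 i).filter fun k => rnk σ k ≤ rnk σ j := by
    simp only [mem_filter]; exact ⟨hj, le_rfl⟩
  rw [hneg, Finset.card_erase_of_mem hjmem] at hpart
  have hc1 := patternRank_mem σ hj
  unfold patternRank at hc1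
  simp only [mem_Icc] at hc1
  have hci : (Icc 1 i).card = i := by rw [Nat.card_Icc]; omega
  omega

lemma pat_rev (hin : i ≤ n) (σ : Perm (Fin n)) :
    pat i (σ.trans Fin.revPerm) = cpl i (pat i σ) := by
  funext j
  by_cases hj : j ∈ Icc 1 i
  · rw [pat, if_pos hj, cpl, if_pos hj, pat, if_pos hj]
    exact patternRank_rev hin σ hj
  · rw [pat, if_neg hj, cpl, if_neg hj]

lemma cpl_cpl (hin : i ≤ n) (σ : Perm (Fin n)) : cpl i (cpl i (pat i σ)) = pat i σ := by
  funext j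
  by_cases hj : j ∈ Icc 1 i
  · rw [cpl, if_pos hj, cpl, if_pos hj, pat, if_pos hj]
    have := patternRank_mem σ hj
    simp only [mem_Icc] at this
    omega
  · rw [cpl, if_neg hj, pat, if_neg hj]

lemma fib_rev_sum (hin : i ≤ n) (σ₀ : Perm (Fin n)) (f : Perm (Fin n) → ℝ) :
    ∑ σ ∈ fib (n := n) i (cpl i (pat i σ₀)), f σ
      = ∑ σ ∈ fib (n := n) i (pat i σ₀), f (σ.trans Fin.revPerm) := by
  have hrr : ∀ σ : Perm (Fin n), (σ.trans Fin.revPerm).trans Fin.revPerm = σ := by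
    intro σ; ext a; simp
  apply Finset.sum_nbij' (fun σ => σ.trans Fin.revPerm) (fun σ => σ.trans Fin.revPerm)
  · intro σ hσ
    simp only [fib, mem_filter, mem_univ, true_and] at hσ ⊢
    rw [pat_rev hin, hσ]
    exact cpl_cpl hin σ₀
  · intro σ hσ
    simp only [fib, mem_filter, mem_univ, true_and] at hσ ⊢
    rw [pat_rev hin, hσ]
  · intro σ _; exact hrr σ
  · intro σ _; exact hrr σ
  · intro σ _; rw [hrr σ]

lemma pat_apply_mem (hin : i ≤ n) (σ : Perm (Fin n)) {j : ℕ} (hj : j ∈ Icc 1 i) :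
    pat i σ j ∈ Icc 1 i := by
  rw [pat, if_pos hj]; exact patternRank_mem σ hj

lemma pat_apply (σ : Perm (Fin n)) {j : ℕ} (hj : j ∈ Icc 1 i) :
    pat i σ j = patternRank σ i j := if_pos hj

lemma mem_fib_self (σ : Perm (Fin n)) : σ ∈ fib (n := n) i (pat i σ) := by
  simp [fib]

lemma dlt_trans_eq (hi : 1 ≤ i) (hin : i < n) (σ τ : Perm (Fin n))
    (hfixi : τ ⟨i - 1, by omega⟩ = ⟨i - 1, by omega⟩) (hfixi1 : τ ⟨i, hin⟩ = ⟨i, hin⟩) :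
    dlt i (τ.trans σ) = dlt i σ := by
  have h1 : (i + 1) - 1 < n := by omega
  have h2 : i - 1 < n := by omega
  have e1 : Tm τ (i + 1) = i + 1 := by
    rw [Tm, dif_pos h1]
    have : (⟨i + 1 - 1, h1⟩ : Fin n) = ⟨i, hin⟩ := by apply Fin.ext; simp
    rw [this, hfixi1]
  have e2 : Tm τ i = i := by
    rw [Tm, dif_pos h2, hfixi]
    show i - 1 + 1 = i
    omega
  rw [dlt, dlt, rnk_trans σ τ h1, rnk_trans σ τ h2, e1, e2]

/-- Classes with the same relative rank at position `i` have the same class-sum. -/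
lemma Kp_eq (hi : 1 ≤ i) (hin : i < n) (σ₀ σ₀' : Perm (Fin n))
    (hip : pat i σ₀ i = pat i σ₀' i) : Kp (n := n) i (pat i σ₀) = Kp (n := n) i (pat i σ₀') := by
  have hin' : i ≤ n := le_of_lt hin
  have hii : i ∈ Icc 1 i := by simp [mem_Icc]; omega
  -- the position relabeling
  set g : Fin n → Fin n := fun a =>
    if h : (a : ℕ) < i then
      ⟨pos i σ₀ (patternRank σ₀' i ((a : ℕ) + 1)) - 1, by
        have hmem : ((a : ℕ) + 1) ∈ Icc 1 i := by simp [mem_Icc]; omega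
        have := (pos_spec hin' σ₀ (patternRank_mem σ₀' hmem)).1
        simp only [mem_Icc] at this
        omega⟩
    else a with hg
  have hgval : ∀ (a : Fin n) (h : (a : ℕ) < i),
      (g a : ℕ) = pos i σ₀ (patternRank σ₀' i ((a : ℕ) + 1)) - 1 := by
    intro a h; rw [hg]; simp only [dif_pos h]
  have hposmem : ∀ (a : Fin n), (a : ℕ) < i →
      pos i σ₀ (patternRank σ₀' i ((a : ℕ) + 1)) ∈ Icc 1 i := by
    intro a h
    have hmem : ((a : ℕ) + 1) ∈ Icc 1 i := by simp [mem_Icc]; omega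
    exact (pos_spec hin' σ₀ (patternRank_mem σ₀' hmem)).1
  have hginj : Function.Injective g := by
    intro a b hab
    by_cases ha : (a : ℕ) < i <;> by_cases hb : (b : ℕ) < i
    · have h1 := hgval a ha
      have h2 := hgval b hb
      rw [hab] at h1
      have hpa := hposmem a ha
      have hpb := hposmem b hb
      simp only [mem_Icc] at hpa hpb
      have hpe : pos i σ₀ (patternRank σ₀' i ((a : ℕ) + 1))
          = pos i σ₀ (patternRank σ₀' i ((b : ℕ) + 1)) := by omega
      have hma : ((a : ℕ) + 1) ∈ Icc 1 i := by simp [mem_Icc]; omega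
      have hmb : ((b : ℕ) + 1) ∈ Icc 1 i := by simp [mem_Icc]; omega
      have hpra := (pos_spec hin' σ₀ (patternRank_mem σ₀' hma)).2
      have hprb := (pos_spec hin' σ₀ (patternRank_mem σ₀' hmb)).2
      rw [hpe] at hpra
      have := patternRank_injOn hin' σ₀' hma hmb (hpra.symm.trans hprb)
      exact Fin.ext (by omega)
    · exfalso
      have h1 := hgval a ha
      have hpa := hposmem a ha
      simp only [mem_Icc] at hpa
      have h2 : g b = b := by rw [hg]; simp only [dif_neg hb]
      rw [hab, h2] at h1
      omega
    · exfalso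
      have h1 := hgval b hb
      have hpb := hposmem b hb
      simp only [mem_Icc] at hpb
      have h2 : g a = a := by rw [hg]; simp only [dif_neg ha]
      rw [← hab, h2] at h1
      omega
    · have h2 : g a = a := by rw [hg]; simp only [dif_neg ha]
      have h3 : g b = b := by rw [hg]; simp only [dif_neg hb]
      rw [h2, h3] at hab; exact hab
  set τ : Perm (Fin n) := Equiv.ofBijective g ((Finite.injective_iff_bijective).mp hginj) with hτ
  have hτg : ∀ a, τ a = g a := fun a => rfl
  have hfix : ∀ a : Fin n, i ≤ (a : ℕ) → τ a = a := by
    intro a ha; rw [hτg, hg]; simp only [dif_neg (by omega : ¬ (a : ℕ) < i)]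
  have hlo : ∀ a : Fin n, (a : ℕ) < i → ((τ a : Fin n) : ℕ) < i := by
    intro a ha
    rw [hτg, hgval a ha]
    have := hposmem a ha
    simp only [mem_Icc] at this
    omega
  have hTm : ∀ j ∈ Icc 1 i, Tm τ j = pos i σ₀ (patternRank σ₀' i j) := by
    intro j hj
    simp only [mem_Icc] at hj
    have h : j - 1 < n := by omega
    rw [Tm, dif_pos h, hτg, hgval ⟨j - 1, h⟩ (by simp; omega)]
    have hj1 : (⟨j - 1, h⟩ : Fin n).val + 1 = j := by simp; omega
    rw [hj1]
    have := hposmem ⟨j - 1, h⟩ (by simp; omega)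
    rw [hj1] at this
    simp only [mem_Icc] at this
    omega
  have hpc : pcomp i (pat i σ₀) τ = pat i σ₀' := by
    funext j
    by_cases hj : j ∈ Icc 1 i
    · rw [pcomp, if_pos hj, hTm j hj]
      have hpm := patternRank_mem σ₀' hj
      have hps := pos_spec hin' σ₀ hpm
      rw [pat_apply _ hps.1, hps.2, pat_apply _ hj]
    · rw [pcomp, if_neg hj, pat, if_neg hj]
  have hTmi : Tm τ i = i := by
    rw [hTm i hii]
    have : patternRank σ₀' i i = patternRank σ₀ i i := by
      have := hip
      rw [pat_apply _ hii, pat_apply _ hii] at this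
      exact this.symm
    rw [this, pos_patternRank hin' σ₀ hii]
  have hfixi : τ ⟨i - 1, by omega⟩ = ⟨i - 1, by omega⟩ := by
    have h : i - 1 < n := by omega
    have := hTmi
    rw [Tm, dif_pos h] at this
    apply Fin.ext
    simp only []
    omega
  have hfixi1 : τ ⟨i, hin⟩ = ⟨i, hin⟩ := hfix ⟨i, hin⟩ (by simp)
  refine Eq.symm ?_
  calc Kp (n := n) i (pat i σ₀')
      = Kp (n := n) i (pcomp i (pat i σ₀) τ) := by rw [hpc]
    _ = ∑ σ ∈ fib (n := n) i (pat i σ₀), dlt i (τ.trans σ) :=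
        fib_trans_sum hfix hlo hin' (pat i σ₀) (pat_vanish σ₀) (dlt i)
    _ = ∑ σ ∈ fib (n := n) i (pat i σ₀), dlt i σ := by
        apply Finset.sum_congr rfl
        intro σ _
        exact dlt_trans_eq hi hin σ τ hfixi hfixi1
    _ = Kp (n := n) i (pat i σ₀) := rfl

lemma dlt_rev (hi : 1 ≤ i) (hin : i < n) (σ : Perm (Fin n)) :
    dlt i (σ.trans Fin.revPerm) = - dlt i σ := by
  have h1 : (i + 1) ∈ Icc 1 n := by simp [mem_Icc]; omega
  have h2 : i ∈ Icc 1 n := by simp [mem_Icc]; omega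
  rw [dlt, dlt, rnk_rev σ h1, rnk_rev σ h2]
  have b1 := rnk_le σ (i + 1)
  have b2 := rnk_le σ i
  have c1 : ((n + 1 - rnk σ (i + 1) : ℕ) : ℝ) = (n : ℝ) + 1 - rnk σ (i + 1) := by
    push_cast [Nat.cast_sub (by omega : rnk σ (i+1) ≤ n + 1)]; ring
  have c2 : ((n + 1 - rnk σ i : ℕ) : ℝ) = (n : ℝ) + 1 - rnk σ i := by
    push_cast [Nat.cast_sub (by omega : rnk σ i ≤ n + 1)]; ring
  rw [c1, c2]; ring

lemma Kp_rev (hi : 1 ≤ i) (hin : i < n) (σ₀ : Perm (Fin n)) :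
    Kp (n := n) i (cpl i (pat i σ₀)) = - Kp (n := n) i (pat i σ₀) := by
  rw [Kp, fib_rev_sum (le_of_lt hin) σ₀ (dlt i), Kp, ← Finset.sum_neg_distrib]
  exact Finset.sum_congr rfl fun σ _ => dlt_rev hi hin σ

lemma Kp_sign (hi : 1 ≤ i) (hin : i < n) (σ₀ : Perm (Fin n)) :
    (2 * pat i σ₀ i ≤ i + 1 → 0 ≤ Kp (n := n) i (pat i σ₀)) ∧
      (i + 1 ≤ 2 * pat i σ₀ i → Kp (n := n) i (pat i σ₀) ≤ 0) := by
  have hin' : i ≤ n := le_of_lt hin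
  have hii : i ∈ Icc 1 i := by simp [mem_Icc]; omega
  have hx : pat i σ₀ i ∈ Icc 1 i := pat_apply_mem hin' σ₀ hii
  simp only [mem_Icc] at hx
  have hrev := Kp_rev hi hin σ₀
  have hrevpat : cpl i (pat i σ₀) = pat i (σ₀.trans Fin.revPerm) := (pat_rev hin' σ₀).symm
  have hcpl_i : cpl i (pat i σ₀) i = i + 1 - pat i σ₀ i := if_pos hii
  by_cases heq : 2 * pat i σ₀ i = i + 1
  · have h1 : pat i σ₀ i = pat i (σ₀.trans Fin.revPerm) i := by
      rw [← hrevpat, hcpl_i]; omega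
    have h2 := Kp_eq hi hin σ₀ (σ₀.trans Fin.revPerm) h1
    rw [← hrevpat, hrev] at h2
    constructor <;> intro _ <;> linarith
  · -- the swap argument
    set x := pat i σ₀ i with hxdef
    have hx' : i + 1 - x ∈ Icc 1 i := by simp [mem_Icc]; omega
    obtain ⟨hj₀Icc, hj₀pr⟩ := pos_spec hin' σ₀ hx'
    set j₀ := pos i σ₀ (i + 1 - x) with hj₀def
    have hj₀mem : 1 ≤ j₀ ∧ j₀ ≤ i := by simpa [mem_Icc] using hj₀Icc
    obtain ⟨hj₀1, hj₀2⟩ := hj₀mem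
    have hj₀ne : j₀ ≠ i := by
      intro h
      rw [h] at hj₀pr
      rw [← pat_apply σ₀ hii] at hj₀pr
      omega
    have hb1 : i - 1 < n := by omega
    have hb2 : j₀ - 1 < n := by omega
    set s : Perm (Fin n) := Equiv.swap (⟨i - 1, hb1⟩ : Fin n) ⟨j₀ - 1, hb2⟩ with hsdef
    have hfix_s : ∀ a : Fin n, i ≤ (a : ℕ) → s a = a := by
      intro a ha
      apply Equiv.swap_apply_of_ne_of_ne
      · intro h; rw [h] at ha; simp at ha; omega
      · intro h; rw [h] at ha; simp at ha; omega
    have hlo_s : ∀ a : Fin n, (a : ℕ) < i → ((s a : Fin n) : ℕ) < i := by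
      intro a ha
      by_cases h1 : a = (⟨i - 1, hb1⟩ : Fin n)
      · rw [h1, hsdef, Equiv.swap_apply_left]; simp; omega
      · by_cases h2 : a = (⟨j₀ - 1, hb2⟩ : Fin n)
        · rw [h2, hsdef, Equiv.swap_apply_right]; simp; omega
        · rw [hsdef, Equiv.swap_apply_of_ne_of_ne h1 h2]; exact ha
    have hTmi : Tm s i = j₀ := by
      rw [Tm, dif_pos hb1, hsdef, Equiv.swap_apply_left]
      simp; omega
    have hTmi1 : Tm s (i + 1) = i + 1 := by
      have hb3 : (i + 1) - 1 < n := by omega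
      rw [Tm, dif_pos hb3]
      have : s ⟨i + 1 - 1, hb3⟩ = ⟨i + 1 - 1, hb3⟩ := by
        apply hfix_s; simp
      rw [this]; simp
    have hq : Kp (n := n) i (pcomp i (pat i σ₀) s)
        = ∑ σ ∈ fib (n := n) i (pat i σ₀), dlt i (s.trans σ) :=
      fib_trans_sum hfix_s hlo_s hin' (pat i σ₀) (pat_vanish σ₀) (dlt i)
    have hql : pcomp i (pat i σ₀) s = pat i (s.trans σ₀) := (pat_trans hfix_s hlo_s hin' σ₀).symm
    have hqi : pat i (s.trans σ₀) i = i + 1 - x := by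
      rw [← hql, pcomp, if_pos hii, hTmi, pat_apply σ₀ hj₀Icc]
      exact hj₀pr
    have hcqi : pat i (σ₀.trans Fin.revPerm) i = i + 1 - x := by
      rw [← hrevpat, hcpl_i]
    have hKq : Kp (n := n) i (pat i (s.trans σ₀)) = - Kp (n := n) i (pat i σ₀) := by
      rw [Kp_eq hi hin (s.trans σ₀) (σ₀.trans Fin.revPerm) (by rw [hqi, hcqi]), ← hrevpat, hrev]
    have hKq' : Kp (n := n) i (pat i (s.trans σ₀))
        = ∑ σ ∈ fib (n := n) i (pat i σ₀), dlt i (s.trans σ) := by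
      rw [← hql]; exact hq
    -- pointwise computation of dlt (s.trans σ)
    have hpoint : ∀ σ ∈ fib (n := n) i (pat i σ₀),
        dlt i (s.trans σ) = (rnk σ (i + 1) : ℝ) - rnk σ j₀ := by
      intro σ _
      rw [dlt, rnk_trans σ s (by omega : (i+1) - 1 < n), rnk_trans σ s (by omega : i - 1 < n),
        hTmi, hTmi1]
    have hcomp : ∀ σ ∈ fib (n := n) i (pat i σ₀),
        (x ≤ i + 1 - x → rnk σ i ≤ rnk σ j₀) ∧ (i + 1 - x ≤ x → rnk σ j₀ ≤ rnk σ i) := by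
      intro σ hσ
      simp only [fib, mem_filter, mem_univ, true_and] at hσ
      have hpi : patternRank σ i i = x := by
        rw [← pat_apply σ hii, hσ, ← hxdef]
      have hpj : patternRank σ i j₀ = i + 1 - x := by
        rw [← pat_apply σ hj₀Icc, hσ]
        rw [pat_apply σ₀ hj₀Icc]
        exact hj₀pr
      constructor
      · intro hle
        have := (patternRank_le_iff hin' σ hj₀Icc hii).mp (by rw [hpi, hpj]; exact hle)
        exact this
      · intro hle
        have := (patternRank_le_iff hin' σ hii hj₀Icc).mp (by rw [hpi, hpj]; exact hle)
        exact this
    constructor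
    · intro hle
      have hxx : x ≤ i + 1 - x := by omega
      have hmono : Kp (n := n) i (pat i (s.trans σ₀)) ≤ Kp (n := n) i (pat i σ₀) := by
        rw [hKq', Kp]
        apply Finset.sum_le_sum
        intro σ hσ
        rw [hpoint σ hσ, dlt]
        have := (hcomp σ hσ).1 hxx
        have : (rnk σ i : ℝ) ≤ rnk σ j₀ := by exact_mod_cast this
        linarith
      rw [hKq] at hmono
      linarith
    · intro hge
      have hxx : i + 1 - x ≤ x := by omega
      have hmono : Kp (n := n) i (pat i σ₀) ≤ Kp (n := n) i (pat i (s.trans σ₀)) := by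
        rw [hKq', Kp]
        apply Finset.sum_le_sum
        intro σ hσ
        rw [hpoint σ hσ, dlt]
        have := (hcomp σ hσ).2 hxx
        have : (rnk σ j₀ : ℝ) ≤ rnk σ i := by exact_mod_cast this
        linarith
      rw [hKq] at hmono
      linarith

lemma relRank_congr (hin : i ≤ n) (σ σ' : Perm (Fin n)) (h : pat i σ = pat i σ')
    {j : ℕ} (hj : j ∈ Icc 1 i) : relRank σ j = relRank σ' j := by
  have key : ∀ τ : Perm (Fin n), pat i τ = pat i σ →
      relRank τ j = ((Icc 1 j).filter fun k => pat i σ k ≤ pat i σ j).card := by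
    intro τ hτ
    rw [relRank, ← hτ]
    congr 1
    apply Finset.filter_congr
    intro k hk
    simp only [mem_Icc] at hk hj
    have hk' : k ∈ Icc 1 i := by simp [mem_Icc]; omega
    have hj' : j ∈ Icc 1 i := by simp [mem_Icc]; omega
    rw [pat_apply τ hk', pat_apply τ hj']
    exact (patternRank_le_iff hin τ hj' hk').symm
  rw [key σ rfl, key σ' h.symm]

lemma opActive_congr (hin : i ≤ n) (σ σ' : Perm (Fin n)) (h : pat i σ = pat i σ') :
    ∀ m, m ≤ i → opActive σ m = opActive σ' m := by
  intro m
  induction m with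
  | zero => intro _; rfl
  | succ m ih =>
    intro hm
    have hmem : (m + 1) ∈ Icc 1 i := by simp [mem_Icc]; omega
    show opActive σ (m + 1) = opActive σ' (m + 1)
    simp only [opActive]
    rw [relRank_congr hin σ σ' h hmem, ih (by omega)]

lemma key_ineq (hi : 1 ≤ i) (hin : i < n) (c : Perm (Fin n) → Prop)
    (hc : ∀ σ σ' : Perm (Fin n), pat i σ = pat i σ' → c σ → c σ') :
    ∑ σ : Perm (Fin n), (if c σ then dlt i σ else 0)
      ≤ ∑ σ : Perm (Fin n), (if opActive σ i then dlt i σ else 0) := by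
  have hin' : i ≤ n := le_of_lt hin
  have hii : i ∈ Icc 1 i := by simp [mem_Icc]; omega
  rw [← Finset.sum_fiberwise_of_maps_to (g := pat i) (t := Finset.univ.image (pat i))
    (fun σ _ => Finset.mem_image_of_mem _ (mem_univ σ)) (fun σ => if c σ then dlt i σ else 0)]
  rw [← Finset.sum_fiberwise_of_maps_to (g := pat i) (t := Finset.univ.image (pat i))
    (fun σ _ => Finset.mem_image_of_mem _ (mem_univ σ))
    (fun σ => if opActive σ i then dlt i σ else 0)]
  apply Finset.sum_le_sum
  intro p hp
  obtain ⟨σ₀, _, hσ₀⟩ := Finset.mem_image.mp hp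
  subst hσ₀
  have hfib : (Finset.univ.filter fun σ : Perm (Fin n) => pat i σ = pat i σ₀)
      = fib (n := n) i (pat i σ₀) := by
    rw [fib]
  have hL : ∑ σ ∈ Finset.univ.filter (fun σ : Perm (Fin n) => pat i σ = pat i σ₀),
      (if c σ then dlt i σ else 0) = if c σ₀ then Kp (n := n) i (pat i σ₀) else 0 := by
    by_cases hc₀ : c σ₀
    · rw [if_pos hc₀, Kp, ← hfib]
      apply Finset.sum_congr rfl
      intro σ hσ
      simp only [mem_filter, mem_univ, true_and] at hσ
      rw [if_pos (hc σ₀ σ hσ.symm hc₀)]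
    · rw [if_neg hc₀]
      apply Finset.sum_eq_zero
      intro σ hσ
      simp only [mem_filter, mem_univ, true_and] at hσ
      rw [if_neg (fun hcσ => hc₀ (hc σ σ₀ hσ hcσ))]
  have hR : ∑ σ ∈ Finset.univ.filter (fun σ : Perm (Fin n) => pat i σ = pat i σ₀),
      (if opActive σ i then dlt i σ else 0)
      = if opActive σ₀ i then Kp (n := n) i (pat i σ₀) else 0 := by
    by_cases ho₀ : opActive σ₀ i
    · rw [if_pos ho₀, Kp, ← hfib]
      apply Finset.sum_congr rfl
      intro σ hσ
      simp only [mem_filter, mem_univ, true_and] at hσ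
      rw [if_pos (by rw [opActive_congr hin' σ σ₀ hσ i le_rfl]; exact ho₀)]
    · rw [if_neg ho₀]
      apply Finset.sum_eq_zero
      intro σ hσ
      simp only [mem_filter, mem_univ, true_and] at hσ
      rw [if_neg (by rw [opActive_congr hin' σ σ₀ hσ i le_rfl]; exact ho₀)]
  rw [hL, hR]
  have hrel : relRank σ₀ i = pat i σ₀ i := (pat_apply σ₀ hii).symm
  have hsign := Kp_sign hi hin σ₀
  obtain ⟨m, hm⟩ : ∃ m, i = m + 1 := ⟨i - 1, by omega⟩
  rcases lt_trichotomy (2 * pat i σ₀ i) (i + 1) with hlt | heq | hgt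
  · have hop : opActive σ₀ i = true := by
      have hrel2 : relRank σ₀ i = pat i σ₀ i := hrel
      subst hm
      simp only [opActive, Bool.or_eq_true, decide_eq_true_eq]
      left
      omega
    rw [if_pos hop]
    have h0 : 0 ≤ Kp (n := n) i (pat i σ₀) := hsign.1 (by omega)
    split_ifs <;> linarith
  · have h0 : Kp (n := n) i (pat i σ₀) = 0 :=
      le_antisymm (hsign.2 (by omega)) (hsign.1 (by omega))
    rw [h0]
    split_ifs <;> exact le_rfl
  · have hop : opActive σ₀ i = false := by
      have hrel2 : relRank σ₀ i = pat i σ₀ i := hrel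
      subst hm
      simp only [opActive, Bool.or_eq_false_iff, Bool.and_eq_false_iff]
      constructor
      · simp only [decide_eq_false_iff_not]
        omega
      · left; left
        simp only [decide_eq_false_iff_not]
        omega
    rw [if_neg (show ¬ (opActive σ₀ i = true) by rw [hop]; decide)]
    have h0 : Kp (n := n) i (pat i σ₀) ≤ 0 := hsign.2 (by omega)
    split_ifs <;> linarith

end OP18

open scoped Classical in
/-- Algorithm OP is optimal for multiple low/high pair selection: for every family of
holding sets `L_i` of permutations of `{1,…,i}` (`1 ≤ i ≤ n−1`), the corresponding
algorithm's expected profit is at most `E[P_OP]`. -/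
theorem stmt18 (n : ℕ) (hn : 2 ≤ n) (L : (i : ℕ) → Finset (Equiv.Perm (Fin i))) :
    (∑ σ : Equiv.Perm (Fin n),
        ∑ i ∈ Finset.Icc 1 (n - 1),
          if ∃ ρ ∈ L i, ∀ j ∈ Finset.Icc 1 i, patternRank σ i j = rnk ρ j
          then ((rnk σ (i + 1) : ℝ) - rnk σ i) else 0) / (n.factorial : ℝ)
      ≤ expPOP n := by
  rw [expPOP]
  have hfac : (0:ℝ) < (n.factorial : ℝ) := by positivity
  rw [div_le_div_iff_of_pos_right hfac]
  rw [Finset.sum_comm]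
  have hrhs : ∑ σ : Equiv.Perm (Fin n), popProfit σ
      = ∑ i ∈ Finset.Icc 1 (n - 1), ∑ σ : Equiv.Perm (Fin n),
          (if opActive σ i then ((rnk σ (i + 1) : ℝ) - rnk σ i) else 0) := by
    rw [Finset.sum_comm]
    rfl
  rw [hrhs]
  apply Finset.sum_le_sum
  intro i hi
  simp only [Finset.mem_Icc] at hi
  have hi1 : 1 ≤ i := hi.1
  have hin : i < n := by omega
  have := OP18.key_ineq hi1 hin
    (fun σ => ∃ ρ ∈ L i, ∀ j ∈ Finset.Icc 1 i, patternRank σ i j = rnk ρ j)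
    (by
      intro σ σ' hpat ⟨ρ, hρ, hall⟩
      refine ⟨ρ, hρ, fun j hj => ?_⟩
      rw [← OP18.pat_apply σ' hj, ← hpat, OP18.pat_apply σ hj]
      exact hall j hj)
  simpa [OP18.dlt] using this
end
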